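/- arXiv:math/0301324 — 6 statements merged into one kernel-verified Lean document; each statement's English description precedes it below -/
import Mathlib

section
/- Let a ∈ ℝ, let p, r be positive real numbers and q ∈ ℂ with p·r − |q|² = 1, and let P = [[p, q], [conj(q), r]] (a positive Hermitian 2×2 complex matrix of determinant 1). Set A₁ = diag(a, −a) and B = P⁻¹ · A₁ · P. If δ ≥ 0 and every entry of B·B† − B†·B has absolute value at most δ (where B† denotes the conjugate transpose), then every entry of B − A₁ has absolute value at most √(2δ). -/
/-!
Since `det P = 1`, `P⁻¹ = adj P`, and `B = P⁻¹ A₁ P` is explicit: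
`B - A₁ = 2a·[[|q|², r q], [-p q̄, -|q|²]]`. Writing `β = 2arq`, `γ = -2apq̄` for the off-diagonal
entries, the commutator `B B† - B† B` has `|β|² - |γ|²` on its diagonal and
`-4a²(pr + |q|²)(p + r) q` off it; the latter dominates `|β| |γ| = 4a² pr |q|²` because
`|q| ≤ p + r`. So the smaller of `|β|, |γ|` is at most `√δ`, the larger at most `√(2δ)`,
and `(2a|q|²)² ≤ |β| |γ|` handles the diagonal.
-/

open Matrix

theorem le_add_of_sq_le_mul {p r k : ℝ} (hp : 0 ≤ p) (hr : 0 ≤ r) (h : k ^ 2 ≤ p * r) :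
    k ≤ p + r := by
  nlinarith [sq_nonneg (p - r), sq_nonneg (p + r - k)]

theorem sq_le_two_mul_of_abs_sq_sub_sq_le {u v δ : ℝ} (hdiff : |u ^ 2 - v ^ 2| ≤ δ)
    (hprod : |u * v| ≤ δ) : u ^ 2 ≤ 2 * δ := by
  rw [abs_mul] at hprod
  rw [← sq_abs u, ← sq_abs v] at hdiff
  rw [← sq_abs u]
  rcases le_total |u| |v| with h | h
  · nlinarith [mul_le_mul_of_nonneg_left h (abs_nonneg u)]
  · nlinarith [le_abs_self (|u| ^ 2 - |v| ^ 2), mul_le_mul_of_nonneg_left h (abs_nonneg v)]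

theorem sq_le_two_mul_of_commutator_bounds {a p r k δ : ℝ} (hp : 0 < p) (hr : 0 < r)
    (hk : 0 ≤ k) (hkpr : k ^ 2 ≤ p * r)
    (hdiff : |(2 * a * r * k) ^ 2 - (2 * a * p * k) ^ 2| ≤ δ)
    (hmix : 4 * a ^ 2 * (p * r + k ^ 2) * (p + r) * k ≤ δ) :
    (2 * a * k ^ 2) ^ 2 ≤ 2 * δ ∧ (2 * a * r * k) ^ 2 ≤ 2 * δ ∧ (2 * a * p * k) ^ 2 ≤ 2 * δ := by
  have hprod : 4 * a ^ 2 * k * (p * r * k) ≤ δ := calc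
    _ ≤ 4 * a ^ 2 * k * ((p * r + k ^ 2) * (p + r)) := by
      gcongr
      · exact le_add_of_nonneg_right (sq_nonneg k)
      · exact le_add_of_sq_le_mul hp.le hr.le hkpr
    _ ≤ δ := by linarith
  have hoff : |(2 * a * r * k) * (2 * a * p * k)| ≤ δ := by
    rw [show (2 * a * r * k) * (2 * a * p * k) = 4 * a ^ 2 * k * (p * r * k) by ring,
      abs_of_nonneg (by positivity)]
    exact hprod
  refine ⟨?_, sq_le_two_mul_of_abs_sq_sub_sq_le hdiff hoff, ?_⟩
  · calc (2 * a * k ^ 2) ^ 2 = 4 * a ^ 2 * k * (k ^ 2 * k) := by ring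
      _ ≤ 4 * a ^ 2 * k * (p * r * k) := by gcongr
      _ ≤ 2 * δ := by linarith [show 0 ≤ 4 * a ^ 2 * k * (p * r * k) by positivity]
  · exact sq_le_two_mul_of_abs_sq_sub_sq_le (by rwa [abs_sub_comm]) (by rwa [mul_comm])

theorem Matrix.inv_mul_diagonal_neg_mul_fin_two {R : Type*} [CommRing R] (a p q s r : R)
    (h : p * r - q * s = 1) :
    (!![p, q; s, r])⁻¹ * !![a, 0; 0, -a] * !![p, q; s, r] =
      !![a * (p * r + q * s), 2 * a * r * q; -(2 * a * p * s), -(a * (p * r + q * s))] := by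
  rw [inv_def, det_fin_two_of, h, Ring.inverse_one, one_smul, adjugate_fin_two_of]
  ext i j
  fin_cases i <;> fin_cases j <;> simp [mul_apply] <;> ring

theorem Matrix.commutator_conjTranspose_fin_two (x : ℝ) (y z : ℂ) :
    !![(x : ℂ), y; z, -x] * (!![(x : ℂ), y; z, -x])ᴴ -
      (!![(x : ℂ), y; z, -x])ᴴ * !![(x : ℂ), y; z, -x] =
      !![((‖y‖ ^ 2 - ‖z‖ ^ 2 : ℝ) : ℂ), 2 * x * (starRingEnd ℂ z - y);
        2 * x * (z - starRingEnd ℂ y), ((‖z‖ ^ 2 - ‖y‖ ^ 2 : ℝ) : ℂ)] := by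
  have hMH : (!![(x : ℂ), y; z, -x])ᴴ = !![(x : ℂ), starRingEnd ℂ z; starRingEnd ℂ y, -x] := by
    ext i j; fin_cases i <;> fin_cases j <;> simp
  rw [hMH, mul_fin_two, mul_fin_two]
  ext i j; fin_cases i <;> fin_cases j <;> simp [Complex.mul_conj', Complex.conj_mul'] <;> ring

noncomputable def conjDiag (a p r : ℝ) (q : ℂ) : Matrix (Fin 2) (Fin 2) ℂ :=
  !![((a * (p * r + ‖q‖ ^ 2) : ℝ) : ℂ), 2 * a * r * q;
    -(2 * a * p * starRingEnd ℂ q), -((a * (p * r + ‖q‖ ^ 2) : ℝ) : ℂ)]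

section conjDiag

variable {a p r : ℝ} {q : ℂ}

theorem inv_mul_diag_mul_eq_conjDiag (hdet : p * r - ‖q‖ ^ 2 = 1) :
    (!![(p : ℂ), q; starRingEnd ℂ q, (r : ℂ)])⁻¹ * !![(a : ℂ), 0; 0, -(a : ℂ)] *
      !![(p : ℂ), q; starRingEnd ℂ q, (r : ℂ)] = conjDiag a p r q := by
  rw [inv_mul_diagonal_neg_mul_fin_two, conjDiag, Complex.mul_conj']
  · simp
  · rw [Complex.mul_conj']; exact_mod_cast hdet

theorem conjDiag_sub_diag (hdet : p * r - ‖q‖ ^ 2 = 1) :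
    conjDiag a p r q - !![(a : ℂ), 0; 0, -(a : ℂ)] =
      !![((2 * a * ‖q‖ ^ 2 : ℝ) : ℂ), ((2 * a * r : ℝ) : ℂ) * q;
        ((-(2 * a * p) : ℝ) : ℂ) * starRingEnd ℂ q, ((-(2 * a * ‖q‖ ^ 2) : ℝ) : ℂ)] := by
  have hpr : (p : ℂ) * r = ((‖q‖ ^ 2 : ℝ) : ℂ) + 1 := by
    rw [sub_eq_iff_eq_add'] at hdet; exact_mod_cast hdet
  ext i j; fin_cases i <;> fin_cases j <;> simp [conjDiag, hpr] <;> ring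

theorem norm_commutator_conjDiag_zero_zero :
    ‖(conjDiag a p r q * (conjDiag a p r q)ᴴ - (conjDiag a p r q)ᴴ * conjDiag a p r q) 0 0‖ =
      |(2 * a * r * ‖q‖) ^ 2 - (2 * a * p * ‖q‖) ^ 2| := by
  have hentry : (conjDiag a p r q * (conjDiag a p r q)ᴴ -
      (conjDiag a p r q)ᴴ * conjDiag a p r q) 0 0 =
      (((2 * a * r * ‖q‖) ^ 2 - (2 * a * p * ‖q‖) ^ 2 : ℝ) : ℂ) := by
    rw [conjDiag, commutator_conjTranspose_fin_two]
    simp [mul_pow]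
  rw [hentry, Complex.norm_real, Real.norm_eq_abs]

theorem norm_commutator_conjDiag_zero_one (hp : 0 < p) (hr : 0 < r) :
    ‖(conjDiag a p r q * (conjDiag a p r q)ᴴ - (conjDiag a p r q)ᴴ * conjDiag a p r q) 0 1‖ =
      4 * a ^ 2 * (p * r + ‖q‖ ^ 2) * (p + r) * ‖q‖ := by
  have hentry : (conjDiag a p r q * (conjDiag a p r q)ᴴ -
      (conjDiag a p r q)ᴴ * conjDiag a p r q) 0 1 =
      ((-(4 * a ^ 2 * (p * r + ‖q‖ ^ 2) * (p + r)) : ℝ) : ℂ) * q := by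
    rw [conjDiag, commutator_conjTranspose_fin_two]
    simp [map_ofNat]
    ring
  rw [hentry, norm_mul, Complex.norm_real, Real.norm_eq_abs, abs_neg,
    abs_of_nonneg (by positivity)]

end conjDiag

theorem entry_bound_of_commutator_small_general (a p r : ℝ) (q : ℂ) (hp : 0 < p) (hr : 0 < r)
    (hdet : p * r - ‖q‖ ^ 2 = 1) (δ : ℝ)
    (P A₁ B : Matrix (Fin 2) (Fin 2) ℂ)
    (hP : P = !![(p : ℂ), q; (starRingEnd ℂ) q, (r : ℂ)])
    (hA₁ : A₁ = !![(a : ℂ), 0; 0, -(a : ℂ)])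
    (hB : B = P⁻¹ * A₁ * P)
    (hsmall : ∀ i j, ‖(B * Bᴴ - Bᴴ * B) i j‖ ≤ δ) :
    ∀ i j, ‖(B - A₁) i j‖ ≤ Real.sqrt (2 * δ) := by
  have hBx : B = conjDiag a p r q := by rw [hB, hP, hA₁, inv_mul_diag_mul_eq_conjDiag hdet]
  have hdiff := hsmall 0 0
  have hmix := hsmall 0 1
  rw [hBx, norm_commutator_conjDiag_zero_zero] at hdiff
  rw [hBx, norm_commutator_conjDiag_zero_one hp hr] at hmix
  obtain ⟨hdiag, hupper, hlower⟩ :=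
    sq_le_two_mul_of_commutator_bounds hp hr (norm_nonneg q) (by linarith) hdiff hmix
  rw [hBx, hA₁, conjDiag_sub_diag hdet]
  simp only [Fin.forall_fin_two, of_apply, cons_val_zero, cons_val_one]
  refine ⟨⟨?_, ?_⟩, ?_, ?_⟩
  · rw [Complex.norm_real, Real.norm_eq_abs]
    exact Real.abs_le_sqrt hdiag
  · rw [norm_mul, Complex.norm_real, Real.norm_eq_abs, ← abs_norm q, ← abs_mul]
    exact Real.abs_le_sqrt hupper
  · rw [norm_mul, Complex.norm_conj, Complex.norm_real, Real.norm_eq_abs, abs_neg,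
      ← abs_norm q, ← abs_mul]
    exact Real.abs_le_sqrt hlower
  · rw [Complex.norm_real, Real.norm_eq_abs, abs_neg]
    exact Real.abs_le_sqrt hdiag

/-- Lemma 4.21 (matrix core): if `P` is a positive Hermitian matrix of determinant one,
`A₁ = diag(a, -a)`, `B = P⁻¹ A₁ P`, and all entries of `B Bᴴ - Bᴴ B` are of size at
most `δ`, then all entries of `B - A₁` are of size at most `√(2δ)`. -/
theorem entry_bound_of_commutator_small (a p r : ℝ) (q : ℂ) (hp : 0 < p) (hr : 0 < r)
    (hdet : p * r - ‖q‖ ^ 2 = 1) (δ : ℝ) (hδ : 0 ≤ δ)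
    (P A₁ B : Matrix (Fin 2) (Fin 2) ℂ)
    (hP : P = !![(p : ℂ), q; (starRingEnd ℂ) q, (r : ℂ)])
    (hA₁ : A₁ = !![(a : ℂ), 0; 0, -(a : ℂ)])
    (hB : B = P⁻¹ * A₁ * P)
    (hsmall : ∀ i j, ‖(B * Bᴴ - Bᴴ * B) i j‖ ≤ δ) :
    ∀ i j, ‖(B - A₁) i j‖ ≤ Real.sqrt (2 * δ) :=
  entry_bound_of_commutator_small_general a p r q hp hr hdet δ P A₁ B hP hA₁ hB hsmall
end

section
/- Let a ∈ ℂ with a ∉ {(π/2)(m + n·i) : m, n ∈ ℤ}. Let Φ : ℝ² → M₂(ℂ) be a continuously differentiable doubly periodic function satisfying, at every point, ∂ₓΦ + (a − conj(a))(σΦ − Φσ) = 0 and ∂_yΦ − i(a + conj(a))(σΦ − Φσ) = 0. Then Φ is a constant diagonal matrix: its off-diagonal entries vanish identically and its diagonal entries are constant. -/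
/-! Since `σ` is diagonal, the `(i, j)` entry of `σΦ - Φσ` is `(σᵢ - σⱼ) Φᵢⱼ`, so the system
decouples: each entry solves `∂ₓf = αf`, `∂_y f = βf` and hence equals `exp (αx + βy) f(0)`.
Diagonal entries have `α = β = 0` and are constant. An off-diagonal entry has
`α = ∓2(a - ā)`, `β = ±2i(a + ā)`, and periodicity of a nonzero such entry forces
`e^α = e^β = 1`, which says exactly that `a` is a half-period point.
-/

open Matrix

/-- Entrywise partial derivative in the `x` direction of a matrix-valued function on `ℝ²`. -/
noncomputable def pX (f : ℝ × ℝ → Matrix (Fin 2) (Fin 2) ℂ) :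
    ℝ × ℝ → Matrix (Fin 2) (Fin 2) ℂ :=
  fun p => Matrix.of fun i j => fderiv ℝ (fun q => f q i j) p (1, 0)

/-- Entrywise partial derivative in the `y` direction of a matrix-valued function on `ℝ²`. -/
noncomputable def pY (f : ℝ × ℝ → Matrix (Fin 2) (Fin 2) ℂ) :
    ℝ × ℝ → Matrix (Fin 2) (Fin 2) ℂ :=
  fun p => Matrix.of fun i j => fderiv ℝ (fun q => f q i j) p (0, 1)

/-- A function on `ℝ²` is doubly periodic (a function on the square torus) if it has
period 1 in both variables. -/
def DoublyPeriodic (f : ℝ × ℝ → Matrix (Fin 2) (Fin 2) ℂ) : Prop :=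
  ∀ x y : ℝ, f (x + 1, y) = f (x, y) ∧ f (x, y + 1) = f (x, y)

section PlaneODE

variable {E : Type*} [NormedAddCommGroup E] [NormedSpace ℂ E]

theorem eq_cexp_smul_of_fderiv_eq {f : ℝ × ℝ → E} {α β : ℂ} (hf : Differentiable ℝ f)
    (hx : ∀ p, fderiv ℝ f p (1, 0) = α • f p) (hy : ∀ p, fderiv ℝ f p (0, 1) = β • f p)
    (p : ℝ × ℝ) : f p = Complex.exp (p.1 * α + p.2 * β) • f 0 := by
  set ℓ : ℝ × ℝ →L[ℝ] ℂ :=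
    (ContinuousLinearMap.fst ℝ ℝ ℝ).smulRight α + (ContinuousLinearMap.snd ℝ ℝ ℝ).smulRight β
  have hℓ : ∀ q : ℝ × ℝ, ℓ q = q.1 * α + q.2 * β := fun q => by simp [ℓ, Complex.real_smul]
  have hf' : ∀ q, fderiv ℝ f q = ℓ.smulRight (f q) := fun q =>
    ContinuousLinearMap.prod_ext (ContinuousLinearMap.ext_ring (by simpa [ℓ] using hx q))
      (ContinuousLinearMap.ext_ring (by simpa [ℓ] using hy q))
  have hg : ∀ q, HasFDerivAt (fun q => Complex.exp (-ℓ q) • f q) (0 : ℝ × ℝ →L[ℝ] E) q := by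
    intro q
    have h := ((Complex.hasDerivAt_exp _).comp_hasFDerivAt q ℓ.hasFDerivAt.neg).smul
      (hf q).hasFDerivAt
    refine h.congr_fderiv (ContinuousLinearMap.ext fun v => ?_)
    simp [hf', smul_smul, mul_comm]
  have hconst := is_const_of_fderiv_eq_zero (fun q => (hg q).differentiableAt)
    (fun q => (hg q).fderiv) p 0
  simp only [map_zero, neg_zero, Complex.exp_zero, one_smul] at hconst
  rw [← hconst, smul_smul, ← Complex.exp_add, hℓ, add_neg_cancel, Complex.exp_zero, one_smul]

theorem eq_zero_of_eq_cexp_smul_of_periodic {f : ℝ × ℝ → E} {α β : ℂ}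
    (hf : ∀ p : ℝ × ℝ, f p = Complex.exp (p.1 * α + p.2 * β) • f 0)
    (hx : f (1, 0) = f 0) (hy : f (0, 1) = f 0)
    (hαβ : ¬(Complex.exp α = 1 ∧ Complex.exp β = 1)) (p : ℝ × ℝ) : f p = 0 := by
  suffices h0 : f 0 = 0 by rw [hf p, h0, smul_zero]
  by_contra h0
  refine hαβ ⟨smul_left_injective ℂ h0 ?_, smul_left_injective ℂ h0 ?_⟩
  · simpa [hx] using (hf (1, 0)).symm
  · simpa [hy] using (hf (0, 1)).symm

end PlaneODE

theorem exists_half_period_of_cexp_eq_one {a k : ℂ} (hk : k = 2 ∨ k = -2)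
    (hx : Complex.exp (-((a - (starRingEnd ℂ) a) * k)) = 1)
    (hy : Complex.exp (Complex.I * (a + (starRingEnd ℂ) a) * k) = 1) :
    ∃ m n : ℤ, a = ((Real.pi : ℂ) / 2) * ((m : ℂ) + (n : ℂ) * Complex.I) := by
  obtain ⟨n, hn⟩ := Complex.exp_eq_one_iff.1 hx
  obtain ⟨m, hm⟩ := Complex.exp_eq_one_iff.1 hy
  rcases hk with rfl | rfl
  · refine ⟨m, -n, ?_⟩
    push_cast
    linear_combination -hn / 4 - Complex.I / 4 * hm +
      (a + (starRingEnd ℂ) a - Real.pi * m) / 2 * Complex.I_sq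
  · refine ⟨-m, n, ?_⟩
    push_cast
    linear_combination hn / 4 + Complex.I / 4 * hm +
      (a + (starRingEnd ℂ) a + Real.pi * m) / 2 * Complex.I_sq

theorem fderiv_entry_of_pX_add_smul_commutator {Φ : ℝ × ℝ → Matrix (Fin 2) (Fin 2) ℂ}
    {c : ℂ} {s : Fin 2 → ℂ} {p : ℝ × ℝ}
    (h : pX Φ p + c • (diagonal s * Φ p - Φ p * diagonal s) = 0) (i j : Fin 2) :
    fderiv ℝ (fun q => Φ q i j) p (1, 0) = (-(c * (s i - s j))) • Φ p i j := by
  have hij := congr_fun₂ h i j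
  simp only [pX, Matrix.add_apply, of_apply, Matrix.smul_apply, Matrix.sub_apply, diagonal_mul,
    mul_diagonal, smul_eq_mul, Matrix.zero_apply] at hij
  linear_combination hij

theorem fderiv_entry_of_pY_sub_smul_commutator {Φ : ℝ × ℝ → Matrix (Fin 2) (Fin 2) ℂ}
    {c : ℂ} {s : Fin 2 → ℂ} {p : ℝ × ℝ}
    (h : pY Φ p - c • (diagonal s * Φ p - Φ p * diagonal s) = 0) (i j : Fin 2) :
    fderiv ℝ (fun q => Φ q i j) p (0, 1) = (c * (s i - s j)) • Φ p i j := by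
  have hij := congr_fun₂ h i j
  simp only [pY, Matrix.sub_apply, of_apply, Matrix.smul_apply, diagonal_mul, mul_diagonal,
    smul_eq_mul, Matrix.zero_apply] at hij
  linear_combination hij

/-- Kernel of the covariant derivative `d_A` for the flat connection
`A = diag(a, -a)dz̄ - diag(ā, -ā)dz` on the trivial rank-2 bundle over `T²`, for `a`
not a half-period point: a doubly periodic `C¹` solution `Φ` of `d_A Φ = 0` is a
constant diagonal matrix. -/
theorem const_diagonal_of_covariant_closed (a : ℂ)
    (ha : ¬ ∃ m n : ℤ, a = ((Real.pi : ℂ) / 2) * ((m : ℂ) + (n : ℂ) * Complex.I))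
    (Φ : ℝ × ℝ → Matrix (Fin 2) (Fin 2) ℂ)
    (hC1 : ∀ i j, ContDiff ℝ 1 fun q => Φ q i j)
    (hper : DoublyPeriodic Φ)
    (σ : Matrix (Fin 2) (Fin 2) ℂ) (hσ : σ = !![1, 0; 0, -1])
    (heqx : ∀ p, pX Φ p + (a - (starRingEnd ℂ) a) • (σ * Φ p - Φ p * σ) = 0)
    (heqy : ∀ p, pY Φ p - (Complex.I * (a + (starRingEnd ℂ) a)) • (σ * Φ p - Φ p * σ) = 0) :
    ∃ d₁ d₂ : ℂ, ∀ p, Φ p = !![d₁, 0; 0, d₂] := by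
  rw [← diagonal_vec2] at hσ
  subst hσ
  have hexp i j := eq_cexp_smul_of_fderiv_eq ((hC1 i j).differentiable one_ne_zero)
    (fun p => fderiv_entry_of_pX_add_smul_commutator (heqx p) i j)
    (fun p => fderiv_entry_of_pY_sub_smul_commutator (heqy p) i j)
  have hoff i j (hij : i ≠ j) : ∀ p, Φ p i j = 0 := by
    refine eq_zero_of_eq_cexp_smul_of_periodic (hexp i j) ?_ ?_ ?_
    · simpa [Prod.mk_zero_zero] using congr_fun₂ (hper 0 0).1 i j
    · simpa [Prod.mk_zero_zero] using congr_fun₂ (hper 0 0).2 i j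
    refine fun ⟨hx, hy⟩ => ha (exists_half_period_of_cexp_eq_one ?_ hx hy)
    fin_cases i <;> fin_cases j <;> simp at hij <;> norm_num
  refine ⟨Φ 0 0 0, Φ 0 1 1, fun p => ?_⟩
  ext i j
  fin_cases i <;> fin_cases j <;> simp [hexp _ _ p, hoff]
end

section
/- Let a ∈ ℂ with a ∉ {(π/2)(m + n·i) : m, n ∈ ℤ}. Let g : ℝ² → M₂(ℂ) be a smooth doubly periodic map with det g(x, y) = 1 for all (x, y), satisfying ∂̄g = a(gσ − σg) at every point. Then there is a constant α ∈ ℂ with α ≠ 0 such that g is identically equal to diag(α, α⁻¹). -/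
open Complex intervalIntegral MeasureTheory Metric

noncomputable def eCh (m : ℤ) (x : ℝ) : ℂ := Complex.exp (-2 * Real.pi * Complex.I * m * x)

lemma eCh_hasDerivAt (m : ℤ) (x : ℝ) :
    HasDerivAt (eCh m) ((-2 * Real.pi * Complex.I * m) * eCh m x) x := by
  have h1 : HasDerivAt (fun x : ℝ => ((-2 * Real.pi * Complex.I * m) * x : ℂ))
      (-2 * Real.pi * Complex.I * m) x := by
    simpa using ((hasDerivAt_id x).ofReal_comp.const_mul ((-2 : ℂ) * Real.pi * Complex.I * m))
  have := h1.cexp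
  unfold eCh
  convert this using 1 <;> ring

lemma eCh_continuous (m : ℤ) : Continuous (eCh m) := by
  unfold eCh; fun_prop

lemma eCh_periodic (m : ℤ) : Function.Periodic (eCh m) 1 := by
  intro x
  unfold eCh
  rw [Complex.ofReal_add, Complex.ofReal_one, mul_add, Complex.exp_add, mul_one]
  have : Complex.exp (-2 * Real.pi * Complex.I * m) = 1 := by
    rw [Complex.exp_eq_one_iff]
    exact ⟨-m, by push_cast; ring⟩
  rw [this, mul_one]

lemma eCh_zero (x : ℝ) : eCh 0 x = 1 := by simp [eCh]

lemma integral_eCh {m : ℤ} (hm : m ≠ 0) : ∫ x in (0:ℝ)..1, eCh m x = 0 := by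
  have hc : (-2 * (Real.pi:ℂ) * Complex.I * m) ≠ 0 := by
    simp [Real.pi_ne_zero, Complex.I_ne_zero, hm]
  have h : ∀ x ∈ Set.uIcc (0:ℝ) 1, HasDerivAt (fun x : ℝ => (-2 * (Real.pi:ℂ) * Complex.I * m)⁻¹ * eCh m x) (eCh m x) x := by
    intro x _
    have := (eCh_hasDerivAt m x).const_mul (-2 * (Real.pi:ℂ) * Complex.I * m)⁻¹
    rw [inv_mul_cancel_left₀ hc] at this
    exact this
  rw [intervalIntegral.integral_eq_sub_of_hasDerivAt h ((eCh_continuous m).intervalIntegrable 0 1)]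
  have : eCh m 1 = eCh m 0 := by simpa using eCh_periodic m 0
  rw [this]; ring

lemma fourier_uniqueness (f : ℝ → ℂ) (hf : Continuous f) (hper : Function.Periodic f 1)
    (h : ∀ m : ℤ, ∫ x in (0:ℝ)..1, eCh m x * f x = 0) : ∀ x, f x = 0 := by
  haveI : Fact (0 < (1:ℝ)) := ⟨one_pos⟩
  set F : C(AddCircle (1:ℝ), ℂ) :=
    ⟨AddCircle.liftIco 1 0 f, AddCircle.liftIco_continuous (by simpa using (hper 0).symm)
      hf.continuousOn⟩ with hF
  have hcoe : ∀ x : ℝ, F (x : AddCircle (1:ℝ)) = f x := by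
    intro x
    have h1 : ((x : ℝ) : AddCircle (1:ℝ)) = ((Int.fract x : ℝ) : AddCircle (1:ℝ)) := by
      rw [QuotientAddGroup.eq_iff_sub_mem]
      refine ⟨⌊x⌋, ?_⟩
      show (⌊x⌋ : ℤ) • (1:ℝ) = x - Int.fract x
      rw [Int.fract, zsmul_eq_mul, mul_one]
      ring
    have h2 : F ((Int.fract x : ℝ) : AddCircle (1:ℝ)) = f (Int.fract x) :=
      AddCircle.liftIco_coe_apply (Set.mem_Ico.mpr ⟨Int.fract_nonneg x, by rw [zero_add]; exact Int.fract_lt_one x⟩)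
    have h3 : f (Int.fract x) = f x := by
      rw [Int.fract, show ((⌊x⌋:ℤ):ℝ) = (⌊x⌋:ℤ)*(1:ℝ) from by ring]; exact hper.sub_int_mul_eq ⌊x⌋
    rw [show F (x : AddCircle (1:ℝ)) = F ((Int.fract x : ℝ) : AddCircle (1:ℝ)) from by rw [h1],
      h2, h3]
  have hcoeff : ∀ n : ℤ, fourierCoeff (F : AddCircle (1:ℝ) → ℂ) n = 0 := by
    intro n
    rw [fourierCoeff_eq_intervalIntegral (F : AddCircle (1:ℝ) → ℂ) n 0]
    rw [show (0:ℝ) + 1 = 1 from by norm_num]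
    rw [← h n]
    simp only [one_div, one_smul, inv_one]
    apply intervalIntegral.integral_congr
    intro x _
    simp only [smul_eq_mul, hcoe]
    congr 1
    rw [fourier_coe_apply]
    unfold eCh
    push_cast
    ring_nf
  have hsum : Summable (fourierCoeff (F : AddCircle (1:ℝ) → ℂ)) := by
    simp only [funext hcoeff]; exact summable_zero
  have hzero : ∀ z : AddCircle (1:ℝ), F z = 0 := by
    intro z
    have := has_pointwise_sum_fourier_series_of_summable hsum z
    simp only [hcoeff, zero_smul] at this
    simpa using this.unique hasSum_zero
  intro x
  rw [← hcoe x, hzero]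

section core
variable {u : ℝ × ℝ → ℂ}

lemma uy_cont (hu : ContDiff ℝ (⊤ : ℕ∞) u) : Continuous fun p => fderiv ℝ u p (0, 1) :=
  (hu.continuous_fderiv (by simp)).clm_apply continuous_const

lemma hasDerivAt_slice (hu : ContDiff ℝ (⊤ : ℕ∞) u) (t y : ℝ) :
    HasDerivAt (fun y => u (t, y)) (fderiv ℝ u (t, y) (0, 1)) y := by
  have h1 : HasDerivAt (fun y : ℝ => ((t, y) : ℝ × ℝ)) (0, 1) y :=
    HasDerivAt.prodMk (hasDerivAt_const y t) (hasDerivAt_id y)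
  exact (((hu.differentiable (by simp)) (t, y)).hasFDerivAt).comp_hasDerivAt y h1

lemma hasDerivAt_sliceX (hu : ContDiff ℝ (⊤ : ℕ∞) u) (x y : ℝ) :
    HasDerivAt (fun x => u (x, y)) (fderiv ℝ u (x, y) (1, 0)) x := by
  have h1 : HasDerivAt (fun x : ℝ => ((x, y) : ℝ × ℝ)) (1, 0) x :=
    HasDerivAt.prodMk (hasDerivAt_id x) (hasDerivAt_const x y)
  exact (((hu.differentiable (by simp)) (x, y)).hasFDerivAt).comp_hasDerivAt x h1

lemma cm_hasDerivAt (hu : ContDiff ℝ (⊤ : ℕ∞) u) (m : ℤ) (y₀ : ℝ) :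
    HasDerivAt (fun y => ∫ x in (0:ℝ)..1, eCh m x * u (x, y))
      (∫ x in (0:ℝ)..1, eCh m x * fderiv ℝ u (x, y₀) (0, 1)) y₀ := by
  have hcont : Continuous u := hu.continuous
  have huy : Continuous fun p : ℝ × ℝ => fderiv ℝ u p (0, 1) := uy_cont hu
  have hGc : Continuous fun p : ℝ × ℝ => eCh m p.1 * fderiv ℝ u p (0, 1) :=
    ((eCh_continuous m).comp continuous_fst).mul huy
  obtain ⟨C, hC⟩ := (isCompact_Icc.prod isCompact_Icc :
      IsCompact (Set.Icc (0:ℝ) 1 ×ˢ Set.Icc (y₀ - 1) (y₀ + 1))).exists_bound_of_continuousOn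
      hGc.continuousOn
  refine (intervalIntegral.hasDerivAt_integral_of_dominated_loc_of_deriv_le
    (F := fun y x => eCh m x * u (x, y))
    (F' := fun y x => eCh m x * fderiv ℝ u (x, y) (0, 1))
    (bound := fun _ => C) (Metric.ball_mem_nhds y₀ one_pos) ?_ ?_ ?_ ?_ ?_ ?_).2
  · exact Filter.Eventually.of_forall fun y =>
      (((eCh_continuous m).mul (hcont.comp (continuous_id.prodMk continuous_const))).aestronglyMeasurable).restrict
  · exact ((eCh_continuous m).mul (hcont.comp (continuous_id.prodMk continuous_const))).intervalIntegrable 0 1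
  · exact (((eCh_continuous m).mul (huy.comp (continuous_id.prodMk continuous_const))).aestronglyMeasurable).restrict
  · refine Filter.Eventually.of_forall fun t ht y hy => ?_
    have ht2 : t ∈ Set.Ioc (0:ℝ) 1 := Set.uIoc_of_le (by norm_num : (0:ℝ) ≤ 1) ▸ ht
    have ht' : t ∈ Set.Icc (0:ℝ) 1 := ⟨ht2.1.le, ht2.2⟩
    have hy' : y ∈ Set.Icc (y₀ - 1) (y₀ + 1) := by
      have h2 := abs_lt.mp (by simpa [Real.norm_eq_abs] using mem_ball_iff_norm.mp hy)
      exact ⟨by linarith [h2.1], by linarith [h2.2]⟩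
    exact hC (t, y) (Set.mk_mem_prod ht' hy')
  · exact intervalIntegrable_const
  · exact Filter.Eventually.of_forall fun t _ y _ =>
      ((hasDerivAt_slice hu t y).const_mul (eCh m t))
end core

section odepart
variable {u : ℝ × ℝ → ℂ}

lemma expMul_hasDerivAt (c : ℂ) (x : ℝ) :
    HasDerivAt (fun x : ℝ => Complex.exp (c * x)) (c * Complex.exp (c * x)) x := by
  have h1 : HasDerivAt (fun x : ℝ => (c * x : ℂ)) c x := by
    simpa using ((hasDerivAt_id x).ofReal_comp.const_mul c)
  have := h1.cexp
  convert this using 1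
  ring

lemma integral_eCh_ux (hu : ContDiff ℝ (⊤ : ℕ∞) u)
    (hpx : ∀ x y : ℝ, u (x + 1, y) = u (x, y)) (m : ℤ) (y : ℝ) :
    ∫ x in (0:ℝ)..1, eCh m x * fderiv ℝ u (x, y) (1, 0)
      = (2 * Real.pi * Complex.I * m) * ∫ x in (0:ℝ)..1, eCh m x * u (x, y) := by
  have hcont : Continuous u := hu.continuous
  have hux : Continuous fun p : ℝ × ℝ => fderiv ℝ u p (1, 0) :=
    (hu.continuous_fderiv (by simp)).clm_apply continuous_const
  have hc1 : Continuous fun x => eCh m x * u (x, y) :=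
    (eCh_continuous m).mul (hcont.comp (continuous_id.prodMk continuous_const))
  have hc2 : Continuous fun x => eCh m x * fderiv ℝ u (x, y) (1, 0) :=
    (eCh_continuous m).mul (hux.comp (continuous_id.prodMk continuous_const))
  have hftc : ∀ x ∈ Set.uIcc (0:ℝ) 1, HasDerivAt (fun x => eCh m x * u (x, y))
      ((-2 * Real.pi * Complex.I * m) * (eCh m x * u (x, y))
        + eCh m x * fderiv ℝ u (x, y) (1, 0)) x := by
    intro x _
    have := (eCh_hasDerivAt m x).mul (hasDerivAt_sliceX hu x y)
    exact this.congr_deriv (by ring)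
  have hint : ∫ x in (0:ℝ)..1, ((-2 * Real.pi * Complex.I * m) * (eCh m x * u (x, y))
      + eCh m x * fderiv ℝ u (x, y) (1, 0))
      = eCh m 1 * u (1, y) - eCh m 0 * u (0, y) :=
    intervalIntegral.integral_eq_sub_of_hasDerivAt hftc
      (((continuous_const.mul hc1).add hc2).intervalIntegrable 0 1)
  have hz : eCh m 1 * u (1, y) - eCh m 0 * u (0, y) = 0 := by
    have h1 : eCh m 1 = eCh m 0 := by simpa using eCh_periodic m 0
    have h2 : u (1, y) = u (0, y) := by simpa using hpx 0 y
    rw [h1, h2]; ring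
  rw [intervalIntegral.integral_add (f := fun x => (-2 * Real.pi * Complex.I * m) * (eCh m x * u (x, y))) (g := fun x => eCh m x * fderiv ℝ u (x, y) (1, 0)) ((continuous_const.mul hc1).intervalIntegrable 0 1)
    (hc2.intervalIntegrable 0 1), intervalIntegral.integral_const_mul, hz] at hint
  linear_combination hint

lemma cm_closed_form (hu : ContDiff ℝ (⊤ : ℕ∞) u)
    (hpx : ∀ x y : ℝ, u (x + 1, y) = u (x, y)) (lam : ℂ)
    (heq : ∀ p, fderiv ℝ u p (1, 0) + Complex.I * fderiv ℝ u p (0, 1) = 2 * lam * u p)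
    (m : ℤ) (y : ℝ) :
    (∫ x in (0:ℝ)..1, eCh m x * u (x, y))
      = (∫ x in (0:ℝ)..1, eCh m x * u (x, 0))
        * Complex.exp ((-2 * Complex.I * lam - 2 * Real.pi * m) * y) := by
  set μ : ℂ := -2 * Complex.I * lam - 2 * Real.pi * m with hμ
  set c : ℝ → ℂ := fun y => ∫ x in (0:ℝ)..1, eCh m x * u (x, y) with hc
  have hcont : Continuous u := hu.continuous
  have huy : Continuous fun p : ℝ × ℝ => fderiv ℝ u p (0, 1) :=
    (hu.continuous_fderiv (by simp)).clm_apply continuous_const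
  have hkey : ∀ y, HasDerivAt c (μ * c y) y := by
    intro y
    have h1 := cm_hasDerivAt hu m y
    have h2 : ∫ x in (0:ℝ)..1, eCh m x * fderiv ℝ u (x, y) (0, 1) = μ * c y := by
      have hptwise : ∀ x, eCh m x * fderiv ℝ u (x, y) (0, 1)
          = (-2 * Complex.I * lam) * (eCh m x * u (x, y))
            + Complex.I * (eCh m x * fderiv ℝ u (x, y) (1, 0)) := by
        intro x
        have h := heq (x, y)
        linear_combination (-Complex.I * eCh m x) * h + (eCh m x * fderiv ℝ u (x, y) (0, 1)) * Complex.I_sq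
      rw [intervalIntegral.integral_congr (g := fun x =>
        (-2 * Complex.I * lam) * (eCh m x * u (x, y))
          + Complex.I * (eCh m x * fderiv ℝ u (x, y) (1, 0))) (fun x _ => hptwise x)]
      have hux : Continuous fun p : ℝ × ℝ => fderiv ℝ u p (1, 0) :=
        (hu.continuous_fderiv (by simp)).clm_apply continuous_const
      have hc1 : Continuous fun x => eCh m x * u (x, y) :=
        (eCh_continuous m).mul (hcont.comp (continuous_id.prodMk continuous_const))
      have hc2 : Continuous fun x => eCh m x * fderiv ℝ u (x, y) (1, 0) :=
        (eCh_continuous m).mul (hux.comp (continuous_id.prodMk continuous_const))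
      rw [intervalIntegral.integral_add (f := fun x => (-2 * Complex.I * lam) * (eCh m x * u (x, y))) (g := fun x => Complex.I * (eCh m x * fderiv ℝ u (x, y) (1, 0))) ((continuous_const.mul hc1).intervalIntegrable 0 1)
        ((continuous_const.mul hc2).intervalIntegrable 0 1),
        intervalIntegral.integral_const_mul, intervalIntegral.integral_const_mul,
        integral_eCh_ux hu hpx m y]
      show _ = μ * c y
      rw [hμ]
      linear_combination (2 * (Real.pi : ℂ) * m * c y) * Complex.I_sq
    rw [← h2]
    exact h1
  -- solve the ODE
  have hφ : ∀ y, HasDerivAt (fun y => c y * Complex.exp (-μ * y)) 0 y := by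
    intro y
    have := (hkey y).mul (expMul_hasDerivAt (-μ) y)
    exact this.congr_deriv (by ring)
  have hconst : ∀ y, c y * Complex.exp (-μ * y) = c 0 * Complex.exp (-μ * 0) :=
    fun y => is_const_of_deriv_eq_zero (fun z => (hφ z).differentiableAt)
      (fun z => (hφ z).deriv) y 0
  have h0 : c y * Complex.exp (-μ * y) = c 0 := by simpa using hconst y
  have : c y = c 0 * Complex.exp (μ * y) := by
    have hne : Complex.exp (-μ * y) ≠ 0 := Complex.exp_ne_zero _
    field_simp at h0 ⊢
    rw [← h0, mul_assoc, ← Complex.exp_add]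
    simp
  simpa using this
end odepart


section final
variable {u : ℝ × ℝ → ℂ}

lemma slice_vanish (hu : ContDiff ℝ (⊤ : ℕ∞) u)
    (hpx : ∀ x y : ℝ, u (x + 1, y) = u (x, y)) (hpy : ∀ x y : ℝ, u (x, y + 1) = u (x, y))
    (lam : ℂ)
    (heq : ∀ p, fderiv ℝ u p (1, 0) + Complex.I * fderiv ℝ u p (0, 1) = 2 * lam * u p)
    (hlat : ∀ m n : ℤ, lam ≠ (Real.pi : ℂ) * ((m : ℂ) + (n : ℂ) * Complex.I)) :
    ∀ p, u p = 0 := by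
  have hczero : ∀ (m : ℤ) (y : ℝ), (∫ x in (0:ℝ)..1, eCh m x * u (x, y)) = 0 := by
    intro m y
    have hform := cm_closed_form hu hpx lam heq m
    have h1 : (∫ x in (0:ℝ)..1, eCh m x * u (x, 1))
        = (∫ x in (0:ℝ)..1, eCh m x * u (x, 0)) := by
      apply intervalIntegral.integral_congr
      intro x _
      have : u (x, 1) = u (x, 0) := by simpa using hpy x 0
      simp only [this]
    have hexpne : Complex.exp (-2 * Complex.I * lam - 2 * Real.pi * m) ≠ 1 := by
      intro hexp
      obtain ⟨n, hn⟩ := Complex.exp_eq_one_iff.mp hexp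
      refine hlat (-n) m ?_
      push_cast
      linear_combination (Complex.I / 2) * hn + (lam + (Real.pi : ℂ) * n) * Complex.I_sq
    have hc0 : (∫ x in (0:ℝ)..1, eCh m x * u (x, 0)) = 0 := by
      have h2 := hform 1
      rw [h1] at h2
      have h3 : (∫ x in (0:ℝ)..1, eCh m x * u (x, 0))
          * (Complex.exp ((-2 * Complex.I * lam - 2 * Real.pi * m) * 1) - 1) = 0 := by
        push_cast at h2
        rw [mul_one] at h2
        rw [mul_one]
        linear_combination -h2
      rcases mul_eq_zero.mp h3 with h | h
      · exact h
      · exact absurd (by simpa using sub_eq_zero.mp h) hexpne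
    rw [hform y, hc0, zero_mul]
  intro p
  obtain ⟨x, y⟩ := p
  exact fourier_uniqueness (fun x => u (x, y))
    (hu.continuous.comp (continuous_id.prodMk continuous_const))
    (fun x => hpx x y) (fun m => hczero m y) x

lemma slice_const (hu : ContDiff ℝ (⊤ : ℕ∞) u)
    (hpx : ∀ x y : ℝ, u (x + 1, y) = u (x, y)) (hpy : ∀ x y : ℝ, u (x, y + 1) = u (x, y))
    (heq0 : ∀ p, fderiv ℝ u p (1, 0) + Complex.I * fderiv ℝ u p (0, 1) = 0) :
    ∃ α : ℂ, ∀ p, u p = α := by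
  have heq : ∀ p, fderiv ℝ u p (1, 0) + Complex.I * fderiv ℝ u p (0, 1)
      = 2 * (0:ℂ) * u p := by
    intro p; rw [heq0 p]; ring
  have hform := cm_closed_form hu hpx 0 heq
  have hm0 : ∀ (m : ℤ), m ≠ 0 → ∀ y, (∫ x in (0:ℝ)..1, eCh m x * u (x, y)) = 0 := by
    intro m hm y
    have h1 : (∫ x in (0:ℝ)..1, eCh m x * u (x, 1))
        = (∫ x in (0:ℝ)..1, eCh m x * u (x, 0)) := by
      apply intervalIntegral.integral_congr
      intro x _
      have : u (x, 1) = u (x, 0) := by simpa using hpy x 0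
      simp only [this]
    have hexpne : Complex.exp (-2 * Complex.I * (0:ℂ) - 2 * Real.pi * m) ≠ 1 := by
      intro hexp
      obtain ⟨n, hn⟩ := Complex.exp_eq_one_iff.mp hexp
      have hre := congrArg Complex.re hn
      simp [Complex.mul_re, Complex.mul_im] at hre
      exact hm hre
    have hc0 : (∫ x in (0:ℝ)..1, eCh m x * u (x, 0)) = 0 := by
      have h2 := hform m 1
      rw [h1] at h2
      have h3 : (∫ x in (0:ℝ)..1, eCh m x * u (x, 0))
          * (Complex.exp ((-2 * Complex.I * (0:ℂ) - 2 * Real.pi * m) * 1) - 1) = 0 := by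
        push_cast at h2
        rw [mul_one] at h2
        rw [mul_one]
        linear_combination -h2
      rcases mul_eq_zero.mp h3 with h | h
      · exact h
      · exact absurd (by simpa using sub_eq_zero.mp h) hexpne
    rw [hform m y, hc0, zero_mul]
  set α : ℂ := ∫ x in (0:ℝ)..1, eCh 0 x * u (x, 0) with hα
  have hc00 : ∀ y, (∫ x in (0:ℝ)..1, eCh 0 x * u (x, y)) = α := by
    intro y
    rw [hform 0 y]
    norm_num
    rfl
  refine ⟨α, ?_⟩
  intro p
  obtain ⟨x, y⟩ := p
  have hz := fourier_uniqueness (fun x => u (x, y) - α)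
    ((hu.continuous.comp (continuous_id.prodMk continuous_const)).sub continuous_const)
    (fun x => by simp only [hpx x y]) ?_ x
  · exact sub_eq_zero.mp hz
  · intro m
    have hcy : Continuous fun t : ℝ => u (t, y) :=
      hu.continuous.comp (continuous_id.prodMk continuous_const)
    have hsplit : (∫ x' in (0:ℝ)..1, eCh m x' * (u (x', y) - α))
        = (∫ x' in (0:ℝ)..1, eCh m x' * u (x', y)) - α * ∫ x' in (0:ℝ)..1, eCh m x' := by
      have hstep : (∫ x' in (0:ℝ)..1, eCh m x' * (u (x', y) - α))
          = ∫ x' in (0:ℝ)..1, (eCh m x' * u (x', y) - α * eCh m x') := by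
        apply intervalIntegral.integral_congr
        intro t _
        show eCh m t * (u (t, y) - α) = eCh m t * u (t, y) - α * eCh m t
        ring
      rw [hstep, intervalIntegral.integral_sub (f := fun x' => eCh m x' * u (x', y)) (g := fun x' => α * eCh m x')
        (((eCh_continuous m).mul hcy).intervalIntegrable 0 1)
        ((continuous_const.mul (eCh_continuous m)).intervalIntegrable 0 1),
        intervalIntegral.integral_const_mul]
    rw [hsplit]
    rcases eq_or_ne m 0 with rfl | hm
    · rw [hc00 y]
      have : ∫ x' in (0:ℝ)..1, eCh 0 x' = 1 := by
        simp [eCh_zero]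
      rw [this]; ring
    · rw [hm0 m hm y, integral_eCh hm]; ring

end final

open Matrix

/-- Proposition 4.6, case 1 with `a` not a half-period point: the isotropy group of the
flat connection `diag(a, -a)dz̄ - diag(ā, -ā)dz` in the complexified gauge group
`Map(T², SL(2,ℂ))` consists exactly of the constant diagonal matrices `diag(α, α⁻¹)`.
The equation `∂̄g = a(gσ - σg)` says that `g` fixes the connection. -/
theorem isotropy_diagonal_case (a : ℂ)
    (ha : ¬ ∃ m n : ℤ, a = ((Real.pi : ℂ) / 2) * ((m : ℂ) + (n : ℂ) * Complex.I))
    (g : ℝ × ℝ → Matrix (Fin 2) (Fin 2) ℂ)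
    (hsm : ∀ i j, ContDiff ℝ (⊤ : ℕ∞) fun q => g q i j)
    (hper : DoublyPeriodic g)
    (hdet : ∀ p, (g p).det = 1)
    (σ : Matrix (Fin 2) (Fin 2) ℂ) (hσ : σ = !![1, 0; 0, -1])
    (heq : ∀ p, ((1 : ℂ) / 2) • (pX g p + Complex.I • pY g p)
        = a • (g p * σ - σ * g p)) :
    ∃ α : ℂ, α ≠ 0 ∧ ∀ p, g p = !![α, 0; 0, α⁻¹] := by
  have hent : ∀ (i j : Fin 2) (p : ℝ × ℝ),
      fderiv ℝ (fun q => g q i j) p (1, 0) + Complex.I * fderiv ℝ (fun q => g q i j) p (0, 1)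
        = 2 * a * ((g p * σ) i j - (σ * g p) i j) := by
    intro i j p
    have h := Matrix.ext_iff.mpr (heq p) i j
    simp only [Matrix.smul_apply, Matrix.add_apply, Matrix.sub_apply, smul_eq_mul,
      pX, pY, Matrix.of_apply] at h
    linear_combination 2 * h
  have hpx : ∀ (i j : Fin 2) (x y : ℝ), g (x + 1, y) i j = g (x, y) i j :=
    fun i j x y => by rw [(hper x y).1]
  have hpy : ∀ (i j : Fin 2) (x y : ℝ), g (x, y + 1) i j = g (x, y) i j :=
    fun i j x y => by rw [(hper x y).2]
  -- off-diagonal entries vanish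
  have h01 : ∀ p, g p 0 1 = 0 := by
    refine slice_vanish (hsm 0 1) (hpx 0 1) (hpy 0 1) (-2 * a) ?_ ?_
    · intro p
      have h := hent 0 1 p
      have hσc : (g p * σ) 0 1 - (σ * g p) 0 1 = -2 * g p 0 1 := by
        simp [hσ, Matrix.mul_apply, Fin.sum_univ_two]
        ring
      rw [hσc] at h
      linear_combination h
    · intro m n hmn
      exact ha ⟨-m, -n, by push_cast; linear_combination (-1/2 : ℂ) * hmn⟩
  have h10 : ∀ p, g p 1 0 = 0 := by
    refine slice_vanish (hsm 1 0) (hpx 1 0) (hpy 1 0) (2 * a) ?_ ?_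
    · intro p
      have h := hent 1 0 p
      have hσc : (g p * σ) 1 0 - (σ * g p) 1 0 = 2 * g p 1 0 := by
        simp [hσ, Matrix.mul_apply, Fin.sum_univ_two]
        ring
      rw [hσc] at h
      linear_combination h
    · intro m n hmn
      exact ha ⟨m, n, by push_cast; linear_combination (1/2 : ℂ) * hmn⟩
  -- diagonal entries constant
  obtain ⟨α, hα⟩ : ∃ α : ℂ, ∀ p, g p 0 0 = α := by
    refine slice_const (hsm 0 0) (hpx 0 0) (hpy 0 0) ?_
    intro p
    have h := hent 0 0 p
    have hσc : (g p * σ) 0 0 - (σ * g p) 0 0 = 0 := by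
      simp [hσ, Matrix.mul_apply, Fin.sum_univ_two]
    rw [hσc] at h
    linear_combination h
  obtain ⟨β, hβ⟩ : ∃ β : ℂ, ∀ p, g p 1 1 = β := by
    refine slice_const (hsm 1 1) (hpx 1 1) (hpy 1 1) ?_
    intro p
    have h := hent 1 1 p
    have hσc : (g p * σ) 1 1 - (σ * g p) 1 1 = 0 := by
      simp [hσ, Matrix.mul_apply, Fin.sum_univ_two]
    rw [hσc] at h
    linear_combination h
  -- determinant
  have hαβ : α * β = 1 := by
    have h := hdet (0, 0)
    rw [Matrix.det_fin_two] at h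
    rw [hα (0,0), hβ (0,0), h01 (0,0), h10 (0,0)] at h
    linear_combination h
  have hα0 : α ≠ 0 := left_ne_zero_of_mul_eq_one hαβ
  have hβval : β = α⁻¹ := (inv_eq_of_mul_eq_one_right hαβ).symm
  refine ⟨α, hα0, ?_⟩
  intro p
  ext i j
  fin_cases i <;> fin_cases j <;>
    simp [hα p, hβ p, h01 p, h10 p, hβval]
end

section
/- Let N = [[0, 1], [0, 0]] ∈ M₂(ℂ). Let g : ℝ² → M₂(ℂ) be a smooth doubly periodic map with det g(x, y) = 1 for all (x, y), satisfying ∂̄g = gN − Ng at every point. Then there are constants ε ∈ {1, −1} and α ∈ ℂ such that g is identically equal to [[ε, α], [0, ε]]. -/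
open Matrix Complex Function Bornology

/-- A doubly periodic entire function is constant. -/
lemma periodic_entire_const {u : ℂ → ℂ} (hu : Differentiable ℂ u)
    (h1 : ∀ z, u (z + 1) = u z) (h2 : ∀ z, u (z + Complex.I) = u z) :
    ∀ z, u z = u 0 := by
  have p1 : Periodic u 1 := h1
  have p2 : Periodic u Complex.I := h2
  have hb : IsBounded (Set.range u) := by
    have hsub : Set.range u ⊆ u '' (Metric.closedBall (0:ℂ) 2) := by
      rintro - ⟨z, rfl⟩
      set w : ℂ := z - (⌊z.re⌋ : ℤ) - (⌊z.im⌋ : ℤ) * Complex.I with hw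
      have hre : w.re = z.re - ⌊z.re⌋ := by simp [hw]
      have him : w.im = z.im - ⌊z.im⌋ := by simp [hw]
      refine ⟨w, ?_, ?_⟩
      · have h1' : |w.re| ≤ 1 := by
          rw [hre, abs_le]
          constructor <;> nlinarith [Int.floor_le z.re, Int.lt_floor_add_one z.re]
        have h2' : |w.im| ≤ 1 := by
          rw [him, abs_le]
          constructor <;> nlinarith [Int.floor_le z.im, Int.lt_floor_add_one z.im]
        have := Complex.norm_le_abs_re_add_abs_im w
        simp only [Metric.mem_closedBall, dist_zero_right]
        linarith
      · have e1 : u w = u (z - (⌊z.re⌋ : ℤ) * (1:ℂ)) := by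
          have := (p2.zsmul (-⌊z.im⌋)) (z - (⌊z.re⌋ : ℤ) * (1:ℂ))
          simp only [zsmul_eq_mul, Int.cast_neg, Periodic] at this
          rw [← this, hw]; ring_nf
        have e2 : u (z - (⌊z.re⌋ : ℤ) * (1:ℂ)) = u z := by
          have := (p1.zsmul (-⌊z.re⌋)) z
          simp only [zsmul_eq_mul, Int.cast_neg, Periodic] at this
          rw [← this]; ring_nf
        rw [e1, e2]
    exact ((isCompact_closedBall (0:ℂ) 2).image hu.continuous).isBounded.subset hsub
  exact fun z => hu.apply_eq_apply_of_bounded hb z 0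

/-- An entire function with quasi-periodicity `u(z+1) = u z + a`, `u(z+I) = u z - a I`
is constant and `a = 0`. -/
lemma quasi_periodic_entire {u : ℂ → ℂ} (hu : Differentiable ℂ u) (a : ℂ)
    (h1 : ∀ z, u (z + 1) = u z + a)
    (h2 : ∀ z, u (z + Complex.I) = u z - a * Complex.I) :
    a = 0 ∧ ∀ z, u z = u 0 := by
  have hu2 : Differentiable ℂ (deriv u) :=
    (hu.contDiff (n := 2)).iterate_deriv' 1 1 |>.differentiable (by norm_num)
  have hd1 : ∀ z, deriv u (z + 1) = deriv u z := by
    intro z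
    rw [← deriv_comp_add_const u 1 z]
    have : (fun x => u (x + 1)) = fun x => u x + a := funext fun x => h1 x
    rw [this, deriv_add_const]
  have hd2 : ∀ z, deriv u (z + Complex.I) = deriv u z := by
    intro z
    rw [← deriv_comp_add_const u Complex.I z]
    have : (fun x => u (x + Complex.I)) = fun x => u x + (- (a * Complex.I)) := by
      funext x; rw [h2 x]; ring
    rw [this, deriv_add_const]
  have hdc : ∀ z, deriv u z = deriv u 0 := periodic_entire_const hu2 hd1 hd2
  set d := deriv u 0 with hdd
  have hmul : Differentiable ℂ (fun z : ℂ => d * z) := by fun_prop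
  have hv : Differentiable ℂ (fun z => u z - d * z) := hu.sub hmul
  have hv' : ∀ z, deriv (fun z => u z - d * z) z = 0 := by
    intro z
    rw [deriv_fun_sub (hu z) (hmul z)]
    have : deriv (fun z => d * z) z = d := by
      simpa using ((hasDerivAt_id z).const_mul d).deriv
    rw [this, hdc z, sub_self]
  have hconst : ∀ z, u z - d * z = u 0 - d * 0 :=
    fun z => is_const_of_deriv_eq_zero hv hv' z 0
  have hform : ∀ z, u z = u 0 + d * z := by
    intro z; have := hconst z; push_cast at this ⊢; linear_combination this
  have hda : d = a := by
    have := h1 0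
    rw [zero_add, hform 1, hform 0] at this
    linear_combination this
  have haI : a * Complex.I = - (a * Complex.I) := by
    have := h2 0
    rw [zero_add, hform Complex.I, hform 0] at this
    linear_combination this - Complex.I * hda
  have ha : a = 0 := by
    have h2aI : 2 * (a * Complex.I) = 0 := by linear_combination haI
    have : a * Complex.I = 0 := by linear_combination h2aI / 2
    rcases mul_eq_zero.1 this with h | h
    · exact h
    · exact absurd h Complex.I_ne_zero
  refine ⟨ha, fun z => ?_⟩
  rw [hform z, hda, ha, zero_mul, add_zero]

lemma restrict_to_complex {f : ℂ → ℂ} {M : ℂ →L[ℂ] ℂ} {x : ℂ}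
    (h : HasFDerivAt f (M.restrictScalars ℝ) x) : HasFDerivAt f M x := by
  rw [hasFDerivAt_iff_isLittleO_nhds_zero] at h ⊢
  simpa using h

/-- A smooth doubly periodic function with constant `∂̄` is constant (and the constant
value of `∂̄` is zero). -/
lemma dbar_const_periodic {f : ℝ × ℝ → ℂ} (hf : ContDiff ℝ (⊤ : ℕ∞) f)
    (hpx : ∀ x y : ℝ, f (x + 1, y) = f (x, y))
    (hpy : ∀ x y : ℝ, f (x, y + 1) = f (x, y))
    (c : ℂ)
    (hc : ∀ p, fderiv ℝ f p (1, 0) + Complex.I * fderiv ℝ f p (0, 1) = 2 * c) :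
    c = 0 ∧ ∀ p, f p = f (0, 0) := by
  set u : ℂ → ℂ := fun z => f (z.re, z.im) - c * (starRingEnd ℂ) z with hud
  have hu : Differentiable ℂ u := by
    intro z
    set p : ℝ × ℝ := (z.re, z.im) with hp
    set L := fderiv ℝ f p with hLdef
    have hfd : HasFDerivAt f L p := (hf.differentiable (by simp) p).hasFDerivAt
    set d : ℂ := L (1, 0) - c with hd
    have h1 : HasFDerivAt (fun z : ℂ => f (z.re, z.im))
        (L.comp (Complex.equivRealProdCLM : ℂ →L[ℝ] ℝ × ℝ)) z := by
      have h0 : HasFDerivAt (⇑Complex.equivRealProdCLM) (Complex.equivRealProdCLM : ℂ →L[ℝ] ℝ × ℝ) z :=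
        Complex.equivRealProdCLM.hasFDerivAt
      have := hfd.comp z h0
      exact this
    have h2 : HasFDerivAt (fun z : ℂ => c * (starRingEnd ℂ) z)
        (c • (Complex.conjCLE : ℂ →L[ℝ] ℂ)) z :=
      (Complex.conjCLE.hasFDerivAt).const_mul c
    have hM : HasFDerivAt u
        (L.comp (Complex.equivRealProdCLM : ℂ →L[ℝ] ℝ × ℝ)
          - c • (Complex.conjCLE : ℂ →L[ℝ] ℂ)) z := h1.sub h2
    have hkey : (L.comp (Complex.equivRealProdCLM : ℂ →L[ℝ] ℝ × ℝ)
          - c • (Complex.conjCLE : ℂ →L[ℝ] ℂ))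
        = ContinuousLinearMap.restrictScalars ℝ (d • (ContinuousLinearMap.id ℂ ℂ)) := by
      have hval1 : (L.comp (Complex.equivRealProdCLM : ℂ →L[ℝ] ℝ × ℝ)
          - c • (Complex.conjCLE : ℂ →L[ℝ] ℂ)) 1 = d := by
        simp [hd, ContinuousLinearEquiv.coe_coe, Complex.equivRealProdCLM_apply]
      have hval2 : (L.comp (Complex.equivRealProdCLM : ℂ →L[ℝ] ℝ × ℝ)
          - c • (Complex.conjCLE : ℂ →L[ℝ] ℂ)) Complex.I = d * Complex.I := by
        have hcp := hc p
        rw [← hLdef] at hcp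
        simp only [ContinuousLinearMap.sub_apply, ContinuousLinearMap.comp_apply,
          ContinuousLinearMap.smul_apply, ContinuousLinearEquiv.coe_coe,
          Complex.equivRealProdCLM_apply, Complex.conjCLE_apply, Complex.conj_I,
          Complex.I_re, Complex.I_im, hd, smul_eq_mul]
        linear_combination (-Complex.I) * hcp + (L (0, 1)) * Complex.I_mul_I
      apply ContinuousLinearMap.ext
      intro w
      have hw : w = w.re • (1 : ℂ) + w.im • Complex.I := by
        simp [Complex.real_smul]
      calc (L.comp (Complex.equivRealProdCLM : ℂ →L[ℝ] ℝ × ℝ)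
          - c • (Complex.conjCLE : ℂ →L[ℝ] ℂ)) w
          = w.re • (L.comp (Complex.equivRealProdCLM : ℂ →L[ℝ] ℝ × ℝ)
          - c • (Complex.conjCLE : ℂ →L[ℝ] ℂ)) 1
            + w.im • (L.comp (Complex.equivRealProdCLM : ℂ →L[ℝ] ℝ × ℝ)
          - c • (Complex.conjCLE : ℂ →L[ℝ] ℂ)) Complex.I := by
            rw [← _root_.map_smul, ← _root_.map_smul, ← _root_.map_add, ← hw]
        _ = w.re • d + w.im • (d * Complex.I) := by rw [hval1, hval2]
        _ = ContinuousLinearMap.restrictScalars ℝ (d • (ContinuousLinearMap.id ℂ ℂ)) w := by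
            simp only [ContinuousLinearMap.coe_restrictScalars',
              ContinuousLinearMap.smul_apply, ContinuousLinearMap.id_apply, smul_eq_mul,
              Complex.real_smul]
            have hww : (w.re : ℂ) + (w.im : ℂ) * Complex.I = w := Complex.re_add_im w
            linear_combination d * hww
    exact (restrict_to_complex (hkey ▸ hM)).differentiableAt
  have hq1 : ∀ z, u (z + 1) = u z + (-c) := by
    intro z
    simp only [hud]
    rw [show (((z + 1 : ℂ).re, (z + 1 : ℂ).im) : ℝ × ℝ) = (z.re + 1, z.im) by simp]
    rw [hpx z.re z.im, _root_.map_add, _root_.map_one]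
    ring
  have hq2 : ∀ z, u (z + Complex.I) = u z - (-c) * Complex.I := by
    intro z
    simp only [hud]
    rw [show (((z + Complex.I : ℂ).re, (z + Complex.I : ℂ).im) : ℝ × ℝ) = (z.re, z.im + 1) by simp]
    rw [hpy z.re z.im, _root_.map_add, Complex.conj_I]
    ring
  obtain ⟨hc0, hcu⟩ := quasi_periodic_entire hu (-c) hq1 hq2
  have hc' : c = 0 := by simpa using hc0
  refine ⟨hc', fun p => ?_⟩
  have hfu : ∀ q : ℝ × ℝ, f q = u ((q.1 : ℂ) + (q.2 : ℂ) * Complex.I) := by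
    intro q
    simp [hud, hc']
  rw [hfu p, hfu (0, 0)]
  simpa using hcu ((p.1 : ℂ) + (p.2 : ℂ) * Complex.I)

/-- Proposition 4.6, case 2: the isotropy group in `Map(T², SL(2,ℂ))` of the connection
with `(0,1)`-part `N dz̄`, `N = [[0,1],[0,0]]`, consists exactly of the constant matrices
`[[±1, α], [0, ±1]]`. The equation `∂̄g = gN - Ng` says that `g` fixes the connection. -/
theorem isotropy_nilpotent_case
    (N : Matrix (Fin 2) (Fin 2) ℂ) (hN : N = !![0, 1; 0, 0])
    (g : ℝ × ℝ → Matrix (Fin 2) (Fin 2) ℂ)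
    (hsm : ∀ i j, ContDiff ℝ (⊤ : ℕ∞) fun q => g q i j)
    (hper : DoublyPeriodic g)
    (hdet : ∀ p, (g p).det = 1)
    (heq : ∀ p, ((1 : ℂ) / 2) • (pX g p + Complex.I • pY g p)
        = g p * N - N * g p) :
    ∃ e α : ℂ, (e = 1 ∨ e = -1) ∧ ∀ p, g p = !![e, α; 0, e] := by
  subst hN
  -- entrywise periodicity
  have hpx : ∀ (i j : Fin 2) (x y : ℝ), g (x + 1, y) i j = g (x, y) i j := by
    intro i j x y
    exact congrFun (congrFun (hper x y).1 i) j
  have hpy : ∀ (i j : Fin 2) (x y : ℝ), g (x, y + 1) i j = g (x, y) i j := by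
    intro i j x y
    exact congrFun (congrFun (hper x y).2 i) j
  -- entrywise ∂̄ equation
  have hE : ∀ (p : ℝ × ℝ) (i j : Fin 2),
      fderiv ℝ (fun q => g q i j) p (1, 0)
        + Complex.I * fderiv ℝ (fun q => g q i j) p (0, 1)
      = 2 * ((g p * !![(0:ℂ), 1; 0, 0] - !![(0:ℂ), 1; 0, 0] * g p) i j) := by
    intro p i j
    have h2 := congrFun (congrFun (heq p) i) j
    simp only [Matrix.smul_apply, Matrix.add_apply, pX, pY, Matrix.of_apply,
      smul_eq_mul] at h2
    linear_combination 2 * h2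
  -- the commutator entries
  have hR00 : ∀ p, (g p * !![(0:ℂ), 1; 0, 0] - !![(0:ℂ), 1; 0, 0] * g p) 0 0
      = -(g p 1 0) := by
    intro p; simp [Matrix.mul_apply, Matrix.vecMul, dotProduct, Fin.sum_univ_two]
  have hR01 : ∀ p, (g p * !![(0:ℂ), 1; 0, 0] - !![(0:ℂ), 1; 0, 0] * g p) 0 1
      = g p 0 0 - g p 1 1 := by
    intro p; simp [Matrix.mul_apply, Matrix.vecMul, dotProduct, Fin.sum_univ_two]
  have hR10 : ∀ p, (g p * !![(0:ℂ), 1; 0, 0] - !![(0:ℂ), 1; 0, 0] * g p) 1 0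
      = 0 := by
    intro p; simp [Matrix.mul_apply, Matrix.vecMul, dotProduct, Fin.sum_univ_two]
  have hR11 : ∀ p, (g p * !![(0:ℂ), 1; 0, 0] - !![(0:ℂ), 1; 0, 0] * g p) 1 1
      = g p 1 0 := by
    intro p; simp [Matrix.mul_apply, Matrix.vecMul, dotProduct, Fin.sum_univ_two]
  -- step 1: g 1 0 is constant
  obtain ⟨-, h10⟩ := dbar_const_periodic (hsm 1 0) (hpx 1 0) (hpy 1 0) 0
    (by intro p; rw [hE p 1 0, hR10 p, mul_zero])
  -- step 2: g 0 0 is constant, and g 1 0 ≡ 0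
  obtain ⟨hg10, h00⟩ := dbar_const_periodic (hsm 0 0) (hpx 0 0) (hpy 0 0)
    (-(g (0, 0) 1 0))
    (by intro p; rw [hE p 0 0, hR00 p, h10 p])
  have hg10' : ∀ p, g p 1 0 = 0 := by
    intro p; rw [h10 p, ← neg_eq_zero]; exact hg10
  -- step 3: g 1 1 is constant
  obtain ⟨-, h11⟩ := dbar_const_periodic (hsm 1 1) (hpx 1 1) (hpy 1 1) 0
    (by intro p; rw [hE p 1 1, hR11 p, hg10' p, mul_zero])
  -- step 4: g 0 1 is constant and g 0 0 = g 1 1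
  obtain ⟨hdiag, h01⟩ := dbar_const_periodic (hsm 0 1) (hpx 0 1) (hpy 0 1)
    (g (0, 0) 0 0 - g (0, 0) 1 1)
    (by intro p; rw [hE p 0 1, hR01 p, h00 p, h11 p])
  have h11' : ∀ p, g p 1 1 = g (0, 0) 0 0 := by
    intro p; rw [h11 p, ← sub_eq_zero]
    linear_combination -hdiag
  -- determinant
  set e := g (0, 0) 0 0 with he
  set α := g (0, 0) 0 1 with hα
  have hdet0 := hdet (0, 0)
  rw [Matrix.det_fin_two, hg10' (0, 0), h11' (0, 0), mul_zero, sub_zero] at hdet0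
  refine ⟨e, α, mul_self_eq_one_iff.1 (by rw [← he] at hdet0; exact hdet0), fun p => ?_⟩
  ext i j
  fin_cases i <;> fin_cases j <;>
    simp [h00 p, h01 p, hg10' p, h11' p, he, hα]
end

section
/- Let g_ss, g_st, g_tt, G_ss, G_st, G_tt be real numbers such that the symmetric 2×2 matrices [[g_ss, g_st], [g_st, g_tt]] and [[G_ss, G_st], [G_st, G_tt]] are mutually inverse, and assume in addition g_ss·g_tt − g_st² = 1. Let Psx, Psy, Ptx, Pty be real numbers satisfying equations (i)–(iv) of the harmonic self-duality system with constant c₀ = 0, namely: (i) G_ss·g_ss·Psx + G_ss·g_st·Psy + G_st·g_ss·Ptx + (G_st·g_st + 1)·Pty = 0; (ii) G_st·g_ss·Psx + (G_st·g_st − 1)·Psy + G_tt·g_ss·Ptx + G_tt·g_st·Pty = 0; (iii) G_ss·g_st·Psx + G_ss·g_tt·Psy + (G_st·g_st − 1)·Ptx + G_st·g_tt·Pty = 0; (iv) (G_st·g_st + 1)·Psx + G_st·g_tt·Psy + G_tt·g_st·Ptx + G_tt·g_tt·Pty = 0. Then G_ss·(G_st·Psy + G_tt·Pty) − G_st·(G_ss·Psy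 + G_st·Pty) + G_tt·(G_ss·Psx + G_st·Ptx) − G_st·(G_st·Psx + G_tt·Ptx) = 0. -/
/-- Section 7 (proof of Theorem 2.6, special Lagrangian case): for a Calabi–Yau base metric
(`det g = 1`) and `c₀ = 0` (first Chern class zero), the imaginary part of the holomorphic
volume form vanishes on the tangent plane of the multisection determined by solutions of
the harmonic self-duality system (i)–(iv). -/
theorem special_lagrangian_condition (gss gst gtt Gss Gst Gtt : ℝ)
    (hinv₁ : gss * Gss + gst * Gst = 1)
    (hinv₂ : gss * Gst + gst * Gtt = 0)
    (hinv₃ : gst * Gss + gtt * Gst = 0)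
    (hinv₄ : gst * Gst + gtt * Gtt = 1)
    (hdet : gss * gtt - gst ^ 2 = 1)
    (Psx Psy Ptx Pty : ℝ)
    (e₁ : Gss * gss * Psx + Gss * gst * Psy + Gst * gss * Ptx + (Gst * gst + 1) * Pty = 0)
    (e₂ : Gst * gss * Psx + (Gst * gst - 1) * Psy + Gtt * gss * Ptx + Gtt * gst * Pty = 0)
    (e₃ : Gss * gst * Psx + Gss * gtt * Psy + (Gst * gst - 1) * Ptx + Gst * gtt * Pty = 0)
    (e₄ : (Gst * gst + 1) * Psx + Gst * gtt * Psy + Gtt * gst * Ptx + Gtt * gtt * Pty = 0) :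
    Gss * (Gst * Psy + Gtt * Pty) - Gst * (Gss * Psy + Gst * Pty)
      + Gtt * (Gss * Psx + Gst * Ptx) - Gst * (Gst * Psx + Gtt * Ptx) = 0 := by
  have h1 : Gss = gtt := by linear_combination gtt*hinv₁ - gst*hinv₃ - Gss*hdet
  have h2 : Gst = -gst := by linear_combination gss*hinv₃ - gst*hinv₁ - Gst*hdet
  have h3 : Gtt = gss := by linear_combination gss*hinv₄ - gst*hinv₂ - Gtt*hdet
  subst h1 h2 h3
  linear_combination ((1:ℝ)/2)*e₁ + ((1:ℝ)/2)*e₄ + ((Psx+Pty)/2)*hdet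
end

section
/- There is a constant C > 0 with the following property. Let ε > 0 and let f : ℝ² → M₂(ℂ) be a smooth doubly periodic function such that f(x, y) is Hermitian for every (x, y) and such that the Frobenius norms of f and of all its partial derivatives of order at most 2 are bounded by ε at every point. Then (∫_{[0,1]²} (‖∂ₓf‖⁴ + ‖∂_yf‖⁴))^{1/4} ≤ C · ε^{1/2} · (∫_{[0,1]²} ‖f‖²)^{1/4}, where ‖·‖ denotes the Frobenius norm of a matrix. -/
open Matrix MeasureTheory

/-- The Frobenius norm of a `2 × 2` complex matrix. -/
noncomputable def fnorm (A : Matrix (Fin 2) (Fin 2) ℂ) : ℝ :=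
  Real.sqrt (∑ i, ∑ j, ‖A i j‖ ^ 2)

/-! ### Auxiliary machinery -/

noncomputable def De (e : ℝ × ℝ) (u : ℝ × ℝ → ℂ) : ℝ × ℝ → ℂ := fun p => fderiv ℝ u p e

lemma De_contDiff {e : ℝ × ℝ} {u : ℝ × ℝ → ℂ} (hu : ContDiff ℝ (⊤ : ℕ∞) u) :
    ContDiff ℝ (⊤ : ℕ∞) (De e u) :=
  (ContinuousLinearMap.apply ℝ ℂ e).contDiff.comp (hu.fderiv_right (by simp))

lemma De_mul {e : ℝ × ℝ} {u v : ℝ × ℝ → ℂ} (hu : ContDiff ℝ (⊤ : ℕ∞) u) (hv : ContDiff ℝ (⊤ : ℕ∞) v) (p : ℝ × ℝ) :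
    De e (fun q => u q * v q) p = De e u p * v p + u p * De e v p := by
  show fderiv ℝ (fun q => u q * v q) p e = _
  rw [fderiv_fun_mul (hu.differentiable (by simp) p) (hv.differentiable (by simp) p)]
  simp only [ContinuousLinearMap.add_apply, ContinuousLinearMap.smul_apply, smul_eq_mul, De]
  ring

lemma clm_comp_De {e : ℝ × ℝ} {E : Type*} [NormedAddCommGroup E] [NormedSpace ℝ E]
    (L : ℂ →L[ℝ] E) {u : ℝ × ℝ → ℂ} (hu : ContDiff ℝ (⊤ : ℕ∞) u) (p : ℝ × ℝ) :
    fderiv ℝ (fun q => L (u q)) p e = L (De e u p) := by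
  have : (fun q => L (u q)) = L ∘ u := rfl
  rw [this, ((L.hasFDerivAt (x := u p)).comp p (hu.differentiable (by simp) p).hasFDerivAt).fderiv]
  rfl

lemma De_conj {e : ℝ × ℝ} {u : ℝ × ℝ → ℂ} (hu : ContDiff ℝ (⊤ : ℕ∞) u) (p : ℝ × ℝ) :
    De e (fun q => (starRingEnd ℂ) (u q)) p = (starRingEnd ℂ) (De e u p) :=
  clm_comp_De ((RCLike.conjCLE (K := ℂ)).toContinuousLinearMap) hu p

lemma De_sum {e : ℝ × ℝ} {ι : Type*} (s : Finset ι) (u : ι → ℝ × ℝ → ℂ)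
    (hu : ∀ i, ContDiff ℝ (⊤ : ℕ∞) (u i)) (p : ℝ × ℝ) :
    De e (fun q => ∑ i ∈ s, u i q) p = ∑ i ∈ s, De e (u i) p := by
  show fderiv ℝ _ p e = _
  rw [fderiv_fun_sum (fun i _ => (hu i).differentiable (by simp) p)]
  simp [De]

lemma De_re {e : ℝ × ℝ} {u : ℝ × ℝ → ℂ} (hu : ContDiff ℝ (⊤ : ℕ∞) u) (p : ℝ × ℝ) :
    fderiv ℝ (fun q => (u q).re) p e = (De e u p).re :=
  clm_comp_De Complex.reCLM hu p

lemma contDiff_conj {u : ℝ × ℝ → ℂ} (hu : ContDiff ℝ (⊤ : ℕ∞) u) :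
    ContDiff ℝ (⊤ : ℕ∞) (fun q => (starRingEnd ℂ) (u q)) :=
  ((RCLike.conjCLE (K := ℂ)).toContinuousLinearMap.contDiff).comp hu

abbrev QQ : Set (ℝ × ℝ) := Set.Icc (0:ℝ) 1 ×ˢ Set.Icc (0:ℝ) 1

lemma fderiv_periodic {E : Type*} [NormedAddCommGroup E] [NormedSpace ℝ E]
    {u : ℝ × ℝ → E} {p c : ℝ × ℝ} (hu : DifferentiableAt ℝ u (p + c))
    (h : ∀ q, u (q + c) = u q) : fderiv ℝ u (p + c) = fderiv ℝ u p := by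
  have h1 : HasFDerivAt (fun q => u (q + c)) (fderiv ℝ u (p + c)) p := by
    have h2 := hu.hasFDerivAt.comp p ((hasFDerivAt_id p).add_const c)
    exact h2
  rw [funext h] at h1
  exact (h1.fderiv).symm

lemma zeroX (F : ℝ × ℝ → ℝ) (hF : ContDiff ℝ (⊤ : ℕ∞) F)
    (hper : ∀ x y : ℝ, F (x + 1, y) = F (x, y)) :
    ∫ p in QQ, fderiv ℝ F p (1, 0) = 0 := by
  have hc : Continuous fun p => fderiv ℝ F p (1, 0) :=
    (ContinuousLinearMap.apply ℝ ℝ ((1:ℝ), (0:ℝ))).continuous.comp (hF.continuous_fderiv (by simp))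
  have hint : IntegrableOn (fun p => fderiv ℝ F p (1, 0)) QQ :=
    hc.continuousOn.integrableOn_compact (isCompact_Icc.prod isCompact_Icc)
  have key : ∀ y : ℝ, ∫ x in Set.Icc (0:ℝ) 1, fderiv ℝ F (x, y) (1, 0) = 0 := by
    intro y
    have hderiv : ∀ x ∈ Set.uIcc (0:ℝ) 1,
        HasDerivAt (fun x => F (x, y)) (fderiv ℝ F (x, y) (1, 0)) x := by
      intro x _
      have h1 : HasDerivAt (fun x : ℝ => ((x, y) : ℝ × ℝ)) ((1:ℝ), (0:ℝ)) x :=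
        (hasDerivAt_id x).prodMk (hasDerivAt_const x y)
      exact (hF.differentiable (by simp) (x, y)).hasFDerivAt.comp_hasDerivAt x h1
    have hii : IntervalIntegrable (fun x => fderiv ℝ F (x, y) (1, 0)) volume 0 1 :=
      (hc.comp (Continuous.prodMk_left y)).intervalIntegrable 0 1
    rw [MeasureTheory.integral_Icc_eq_integral_Ioc, ← intervalIntegral.integral_of_le zero_le_one,
      intervalIntegral.integral_eq_sub_of_hasDerivAt hderiv hii]
    have h3 : F (1, y) = F (0, y) := by simpa using hper 0 y
    simp [h3]
  calc ∫ p in QQ, fderiv ℝ F p (1, 0)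
      = ∫ x in Set.Icc (0:ℝ) 1, ∫ y in Set.Icc (0:ℝ) 1, fderiv ℝ F (x, y) (1, 0) :=
        MeasureTheory.setIntegral_prod _ hint
    _ = ∫ y in Set.Icc (0:ℝ) 1, ∫ x in Set.Icc (0:ℝ) 1, fderiv ℝ F (x, y) (1, 0) := by
        apply MeasureTheory.integral_integral_swap
        rw [Measure.prod_restrict]
        exact hint
    _ = 0 := by simp [key]

lemma zeroY (F : ℝ × ℝ → ℝ) (hF : ContDiff ℝ (⊤ : ℕ∞) F)
    (hper : ∀ x y : ℝ, F (x, y + 1) = F (x, y)) :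
    ∫ p in QQ, fderiv ℝ F p (0, 1) = 0 := by
  have hc : Continuous fun p => fderiv ℝ F p (0, 1) :=
    (ContinuousLinearMap.apply ℝ ℝ ((0:ℝ), (1:ℝ))).continuous.comp (hF.continuous_fderiv (by simp))
  have hint : IntegrableOn (fun p => fderiv ℝ F p (0, 1)) QQ :=
    hc.continuousOn.integrableOn_compact (isCompact_Icc.prod isCompact_Icc)
  have key : ∀ x : ℝ, ∫ y in Set.Icc (0:ℝ) 1, fderiv ℝ F (x, y) (0, 1) = 0 := by
    intro x
    have hderiv : ∀ y ∈ Set.uIcc (0:ℝ) 1,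
        HasDerivAt (fun y => F (x, y)) (fderiv ℝ F (x, y) (0, 1)) y := by
      intro y _
      have h1 : HasDerivAt (fun y : ℝ => ((x, y) : ℝ × ℝ)) ((0:ℝ), (1:ℝ)) y :=
        (hasDerivAt_const y x).prodMk (hasDerivAt_id y)
      exact (hF.differentiable (by simp) (x, y)).hasFDerivAt.comp_hasDerivAt y h1
    have hii : IntervalIntegrable (fun y => fderiv ℝ F (x, y) (0, 1)) volume 0 1 :=
      (hc.comp (Continuous.prodMk_right x)).intervalIntegrable 0 1
    rw [MeasureTheory.integral_Icc_eq_integral_Ioc, ← intervalIntegral.integral_of_le zero_le_one,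
      intervalIntegral.integral_eq_sub_of_hasDerivAt hderiv hii]
    have h3 : F (x, 1) = F (x, 0) := by simpa using hper x 0
    simp [h3]
  calc ∫ p in QQ, fderiv ℝ F p (0, 1)
      = ∫ x in Set.Icc (0:ℝ) 1, ∫ y in Set.Icc (0:ℝ) 1, fderiv ℝ F (x, y) (0, 1) :=
        MeasureTheory.setIntegral_prod _ hint
    _ = 0 := by simp [key]

lemma fnorm_eq_sqrt_sum (M : Matrix (Fin 2) (Fin 2) ℂ) :
    fnorm M = Real.sqrt (∑ z : Fin 2 × Fin 2, ‖M z.1 z.2‖ ^ 2) := by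
  rw [fnorm]
  congr 1
  exact (Fintype.sum_prod_type (f := fun z : Fin 2 × Fin 2 => ‖M z.1 z.2‖ ^ 2)).symm

lemma fnorm_nonneg' (M : Matrix (Fin 2) (Fin 2) ℂ) : 0 ≤ fnorm M := Real.sqrt_nonneg _

lemma fnorm_sq (M : Matrix (Fin 2) (Fin 2) ℂ) :
    fnorm M ^ 2 = ∑ z : Fin 2 × Fin 2, ‖M z.1 z.2‖ ^ 2 := by
  rw [fnorm_eq_sqrt_sum, Real.sq_sqrt]
  exact Finset.sum_nonneg fun z _ => sq_nonneg _

lemma cs4 (a b : Fin 2 × Fin 2 → ℝ) :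
    ∑ z, a z * b z ≤ Real.sqrt (∑ z, a z ^ 2) * Real.sqrt (∑ z, b z ^ 2) := by
  have h := Finset.sum_mul_sq_le_sq_mul_sq Finset.univ a b
  calc ∑ z, a z * b z ≤ |∑ z, a z * b z| := le_abs_self _
    _ = Real.sqrt ((∑ z, a z * b z) ^ 2) := (Real.sqrt_sq_eq_abs _).symm
    _ ≤ Real.sqrt ((∑ z, a z ^ 2) * (∑ z, b z ^ 2)) := Real.sqrt_le_sqrt h
    _ = _ := Real.sqrt_mul (Finset.sum_nonneg fun z _ => sq_nonneg _) _

/-! ### The torus gradient estimate in one direction -/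

noncomputable def pE (e : ℝ × ℝ) (f : ℝ × ℝ → Matrix (Fin 2) (Fin 2) ℂ) :
    ℝ × ℝ → Matrix (Fin 2) (Fin 2) ℂ :=
  fun p => Matrix.of fun i j => fderiv ℝ (fun q => f q i j) p e

namespace L617

variable (e : ℝ × ℝ) (f : ℝ × ℝ → Matrix (Fin 2) (Fin 2) ℂ)

noncomputable def uu : Fin 2 × Fin 2 → ℝ × ℝ → ℂ := fun z q => f q z.1 z.2
noncomputable def vv : Fin 2 × Fin 2 → ℝ × ℝ → ℂ := fun z => De e (uu f z)
noncomputable def ww : Fin 2 × Fin 2 → ℝ × ℝ → ℂ := fun z => De e (vv e f z)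
noncomputable def gg : ℝ × ℝ → ℝ := fun p => ∑ z, ‖vv e f z p‖ ^ 2
noncomputable def gC : ℝ × ℝ → ℂ := fun p => ∑ z, (starRingEnd ℂ) (vv e f z p) * vv e f z p
noncomputable def cc : ℝ × ℝ → ℂ := fun p => ∑ z, (starRingEnd ℂ) (uu f z p) * vv e f z p
noncomputable def dd : ℝ × ℝ → ℂ := fun p => ∑ z, (starRingEnd ℂ) (uu f z p) * ww e f z p
noncomputable def FF : ℝ × ℝ → ℝ := fun p => (cc e f p * gC e f p).re

end L617

open L617 in
lemma core (e : ℝ × ℝ)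
    (hzero : ∀ F : ℝ × ℝ → ℝ, ContDiff ℝ (⊤ : ℕ∞) F →
      (∀ x y : ℝ, F (x + 1, y) = F (x, y)) → (∀ x y : ℝ, F (x, y + 1) = F (x, y)) →
      ∫ p in QQ, fderiv ℝ F p e = 0)
    (ε : ℝ) (hε : 0 < ε) (f : ℝ × ℝ → Matrix (Fin 2) (Fin 2) ℂ)
    (hsm : ∀ i j, ContDiff ℝ (⊤ : ℕ∞) fun q => f q i j)
    (hper : DoublyPeriodic f)
    (h0 : ∀ p, fnorm (f p) ≤ ε)
    (h1 : ∀ p, fnorm (pE e f p) ≤ ε)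
    (h2 : ∀ p, fnorm (pE e (pE e f) p) ≤ ε) :
    ∫ p in QQ, fnorm (pE e f p) ^ 4 ≤ 9 * ε ^ 2 * ∫ p in QQ, fnorm (f p) ^ 2 := by
  classical
  have hu : ∀ z, ContDiff ℝ (⊤ : ℕ∞) (uu f z) := fun z => hsm z.1 z.2
  have hv : ∀ z, ContDiff ℝ (⊤ : ℕ∞) (vv e f z) := fun z => De_contDiff (hu z)
  have hw : ∀ z, ContDiff ℝ (⊤ : ℕ∞) (ww e f z) := fun z => De_contDiff (hv z)
  have hgC : ContDiff ℝ (⊤ : ℕ∞) (gC e f) :=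
    ContDiff.sum fun z _ => (contDiff_conj (hv z)).mul (hv z)
  have hcc : ContDiff ℝ (⊤ : ℕ∞) (cc e f) :=
    ContDiff.sum fun z _ => (contDiff_conj (hu z)).mul (hv z)
  have hH : ContDiff ℝ (⊤ : ℕ∞) (fun p => cc e f p * gC e f p) := hcc.mul hgC
  have hF : ContDiff ℝ (⊤ : ℕ∞) (FF e f) := Complex.reCLM.contDiff.comp hH
  -- gC is real
  have hgnn : ∀ p, 0 ≤ gg e f p := fun p => Finset.sum_nonneg fun z _ => sq_nonneg _
  have hgCre : ∀ p, gC e f p = ((gg e f p : ℝ) : ℂ) := by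
    intro p
    show ∑ z, (starRingEnd ℂ) (vv e f z p) * vv e f z p
        = ((∑ z, ‖vv e f z p‖ ^ 2 : ℝ) : ℂ)
    push_cast
    refine Finset.sum_congr rfl fun z _ => ?_
    rw [mul_comm, Complex.mul_conj, Complex.normSq_eq_norm_sq]
    push_cast
    ring
  -- periodicity
  have hperu1 : ∀ (z : Fin 2 × Fin 2) q, uu f z (q + (1, 0)) = uu f z q := by
    intro z q
    have h : q + ((1:ℝ), (0:ℝ)) = (q.1 + 1, q.2) := by simp [Prod.ext_iff]
    show f (q + (1, 0)) z.1 z.2 = f q z.1 z.2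
    rw [h, (hper q.1 q.2).1]
  have hperu2 : ∀ (z : Fin 2 × Fin 2) q, uu f z (q + (0, 1)) = uu f z q := by
    intro z q
    have h : q + ((0:ℝ), (1:ℝ)) = (q.1, q.2 + 1) := by simp [Prod.ext_iff]
    show f (q + (0, 1)) z.1 z.2 = f q z.1 z.2
    rw [h, (hper q.1 q.2).2]
  have hDeper : ∀ (h : ℝ × ℝ → ℂ), ContDiff ℝ (⊤ : ℕ∞) h → ∀ c : ℝ × ℝ, (∀ q, h (q + c) = h q) →
      ∀ q, De e h (q + c) = De e h q := by
    intro h hh c hc q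
    show fderiv ℝ h (q + c) e = fderiv ℝ h q e
    rw [fderiv_periodic ((hh.differentiable (by simp)) _) hc]
  have hFper : ∀ c : ℝ × ℝ, (∀ z q, uu f z (q + c) = uu f z q) →
      ∀ q, FF e f (q + c) = FF e f q := by
    intro c hc q
    have hvc : ∀ z, vv e f z (q + c) = vv e f z q := fun z => hDeper (uu f z) (hu z) c (hc z) q
    show (cc e f (q + c) * gC e f (q + c)).re = (cc e f q * gC e f q).re
    have hc1 : cc e f (q + c) = cc e f q := Finset.sum_congr rfl fun z _ => by
      rw [hc z q, hvc z]
    have hc2 : gC e f (q + c) = gC e f q := Finset.sum_congr rfl fun z _ => by rw [hvc z]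
    rw [hc1, hc2]
  have hFper1 : ∀ x y : ℝ, FF e f (x + 1, y) = FF e f (x, y) := by
    intro x y
    have h := hFper (1, 0) hperu1 (x, y)
    simpa using h
  have hFper2 : ∀ x y : ℝ, FF e f (x, y + 1) = FF e f (x, y) := by
    intro x y
    have h := hFper (0, 1) hperu2 (x, y)
    simpa using h
  -- derivative computations
  have hDcc : ∀ p, De e (cc e f) p = gC e f p + dd e f p := by
    intro p
    have h1 : De e (cc e f) p
        = ∑ z, ((starRingEnd ℂ) (vv e f z p) * vv e f z p
            + (starRingEnd ℂ) (uu f z p) * ww e f z p) := by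
      rw [show cc e f = fun q => ∑ z, (starRingEnd ℂ) (uu f z q) * vv e f z q from rfl,
        De_sum Finset.univ _ (fun z => (contDiff_conj (hu z)).mul (hv z)) p]
      refine Finset.sum_congr rfl fun z _ => ?_
      rw [De_mul (contDiff_conj (hu z)) (hv z) p, De_conj (hu z) p]
      rfl
    rw [h1, Finset.sum_add_distrib]
    rfl
  have hDgC : ∀ p, De e (gC e f) p
      = ∑ z, ((starRingEnd ℂ) (ww e f z p) * vv e f z p
          + (starRingEnd ℂ) (vv e f z p) * ww e f z p) := by
    intro p
    rw [show gC e f = fun q => ∑ z, (starRingEnd ℂ) (vv e f z q) * vv e f z q from rfl,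
      De_sum Finset.univ _ (fun z => (contDiff_conj (hv z)).mul (hv z)) p]
    refine Finset.sum_congr rfl fun z _ => ?_
    rw [De_mul (contDiff_conj (hv z)) (hv z) p, De_conj (hv z) p]
    rfl
  have hkey : ∀ p, fderiv ℝ (FF e f) p e
      = gg e f p ^ 2 + (dd e f p).re * gg e f p + (cc e f p * De e (gC e f) p).re := by
    intro p
    have hFre : fderiv ℝ (FF e f) p e = (De e (fun q => cc e f q * gC e f q) p).re :=
      De_re hH p
    rw [hFre, De_mul hcc hgC p, hDcc p, hgCre p]
    simp only [Complex.add_re, Complex.mul_re, Complex.ofReal_re, Complex.ofReal_im,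
      Complex.add_im, mul_zero, sub_zero]
    ring
  -- pointwise bounds
  have hsqrtg : ∀ p, Real.sqrt (gg e f p) = fnorm (pE e f p) := by
    intro p
    rw [fnorm_eq_sqrt_sum]
    rfl
  have habs_dd : ∀ p, ‖dd e f p‖ ≤ fnorm (f p) * ε := by
    intro p
    calc ‖dd e f p‖
        ≤ ∑ z, ‖(starRingEnd ℂ) (uu f z p) * ww e f z p‖ :=
          norm_sum_le _ _
      _ = ∑ z, ‖uu f z p‖ * ‖ww e f z p‖ := by
          refine Finset.sum_congr rfl fun z _ => ?_
          rw [norm_mul, Complex.norm_conj]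
      _ ≤ Real.sqrt (∑ z, ‖uu f z p‖ ^ 2)
          * Real.sqrt (∑ z, ‖ww e f z p‖ ^ 2) := cs4 _ _
      _ = fnorm (f p) * fnorm (pE e (pE e f) p) := by
          rw [fnorm_eq_sqrt_sum, fnorm_eq_sqrt_sum]
          rfl
      _ ≤ fnorm (f p) * ε := mul_le_mul_of_nonneg_left (h2 p) (fnorm_nonneg' _)
  have habs_cc : ∀ p, ‖cc e f p‖ ≤ fnorm (f p) * Real.sqrt (gg e f p) := by
    intro p
    calc ‖cc e f p‖
        ≤ ∑ z, ‖(starRingEnd ℂ) (uu f z p) * vv e f z p‖ :=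
          norm_sum_le _ _
      _ = ∑ z, ‖uu f z p‖ * ‖vv e f z p‖ := by
          refine Finset.sum_congr rfl fun z _ => ?_
          rw [norm_mul, Complex.norm_conj]
      _ ≤ Real.sqrt (∑ z, ‖uu f z p‖ ^ 2)
          * Real.sqrt (∑ z, ‖vv e f z p‖ ^ 2) := cs4 _ _
      _ = fnorm (f p) * Real.sqrt (gg e f p) := by
          rw [fnorm_eq_sqrt_sum]
          rfl
  have habs_DgC : ∀ p, ‖De e (gC e f) p‖ ≤ 2 * (Real.sqrt (gg e f p) * ε) := by
    intro p
    rw [hDgC p]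
    calc ‖∑ z, ((starRingEnd ℂ) (ww e f z p) * vv e f z p
            + (starRingEnd ℂ) (vv e f z p) * ww e f z p)‖
        ≤ ∑ z, ‖(starRingEnd ℂ) (ww e f z p) * vv e f z p
            + (starRingEnd ℂ) (vv e f z p) * ww e f z p‖ := norm_sum_le _ _
      _ ≤ ∑ z, 2 * (‖vv e f z p‖ * ‖ww e f z p‖) := by
          refine Finset.sum_le_sum fun z _ => ?_
          calc ‖_‖ ≤ ‖(starRingEnd ℂ) (ww e f z p) * vv e f z p‖
                + ‖(starRingEnd ℂ) (vv e f z p) * ww e f z p‖ :=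
              norm_add_le _ _
            _ = 2 * (‖vv e f z p‖ * ‖ww e f z p‖) := by
              rw [norm_mul, norm_mul, Complex.norm_conj, Complex.norm_conj]; ring
      _ = 2 * ∑ z, ‖vv e f z p‖ * ‖ww e f z p‖ := by
          rw [Finset.mul_sum]
      _ ≤ 2 * (Real.sqrt (∑ z, ‖vv e f z p‖ ^ 2)
          * Real.sqrt (∑ z, ‖ww e f z p‖ ^ 2)) := by
          have := cs4 (fun z => ‖vv e f z p‖) (fun z => ‖ww e f z p‖)
          linarith
      _ ≤ 2 * (Real.sqrt (gg e f p) * ε) := by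
          have he1 : Real.sqrt (∑ z, ‖ww e f z p‖ ^ 2)
              = fnorm (pE e (pE e f) p) := by
            rw [fnorm_eq_sqrt_sum]
            rfl
          have he2 : Real.sqrt (∑ z, ‖vv e f z p‖ ^ 2) = Real.sqrt (gg e f p) := rfl
          rw [he1, he2]
          have := h2 p
          have hs := Real.sqrt_nonneg (gg e f p)
          nlinarith [fnorm_nonneg' (pE e (pE e f) p)]
  have hpt : ∀ p, gg e f p ^ 2
      ≤ fderiv ℝ (FF e f) p e + 3 * ε * (fnorm (f p) * gg e f p) := by
    intro p
    have h1 := hkey p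
    have A : |(dd e f p).re| ≤ fnorm (f p) * ε :=
      le_trans (Complex.abs_re_le_norm _) (habs_dd p)
    have hss : Real.sqrt (gg e f p) * Real.sqrt (gg e f p) = gg e f p :=
      Real.mul_self_sqrt (hgnn p)
    have B : |(cc e f p * De e (gC e f) p).re| ≤ 2 * ε * (fnorm (f p) * gg e f p) := by
      refine le_trans (Complex.abs_re_le_norm _) ?_
      rw [norm_mul]
      calc ‖cc e f p‖ * ‖De e (gC e f) p‖
          ≤ (fnorm (f p) * Real.sqrt (gg e f p)) * (2 * (Real.sqrt (gg e f p) * ε)) := by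
            refine mul_le_mul (habs_cc p) (habs_DgC p) (norm_nonneg _) ?_
            exact mul_nonneg (fnorm_nonneg' _) (Real.sqrt_nonneg _)
        _ = 2 * ε * (fnorm (f p) * (Real.sqrt (gg e f p) * Real.sqrt (gg e f p))) := by ring
        _ = 2 * ε * (fnorm (f p) * gg e f p) := by rw [hss]
    have A' : |(dd e f p).re * gg e f p| ≤ ε * (fnorm (f p) * gg e f p) := by
      rw [abs_mul, abs_of_nonneg (hgnn p)]
      calc |(dd e f p).re| * gg e f p ≤ (fnorm (f p) * ε) * gg e f p :=
          mul_le_mul_of_nonneg_right A (hgnn p)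
        _ = ε * (fnorm (f p) * gg e f p) := by ring
    have hA := abs_le.mp A'
    have hB := abs_le.mp B
    linarith
  -- continuity / integrability
  have hcompact : IsCompact QQ := isCompact_Icc.prod isCompact_Icc
  have hmeas : MeasurableSet QQ := measurableSet_Icc.prod measurableSet_Icc
  have hgcont : Continuous (gg e f) :=
    continuous_finset_sum _ fun z _ => (continuous_norm.comp (hv z).continuous).pow 2
  have hfncont : Continuous fun p => fnorm (f p) := by
    have h : (fun p => fnorm (f p))
        = fun p => Real.sqrt (∑ z : Fin 2 × Fin 2, ‖uu f z p‖ ^ 2) :=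
      funext fun p => fnorm_eq_sqrt_sum _
    rw [h]
    exact Real.continuous_sqrt.comp
      (continuous_finset_sum _ fun z _ => (continuous_norm.comp (hu z).continuous).pow 2)
  have hdercont : Continuous fun p => fderiv ℝ (FF e f) p e :=
    (ContinuousLinearMap.apply ℝ ℝ e).continuous.comp (hF.continuous_fderiv (by simp))
  have I1 : IntegrableOn (fun p => gg e f p ^ 2) QQ :=
    ((hgcont.pow 2)).continuousOn.integrableOn_compact hcompact
  have I2 : IntegrableOn (fun p => fderiv ℝ (FF e f) p e) QQ :=
    hdercont.continuousOn.integrableOn_compact hcompact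
  have I3 : IntegrableOn (fun p => fnorm (f p) * gg e f p) QQ :=
    (hfncont.mul hgcont).continuousOn.integrableOn_compact hcompact
  have I4 : IntegrableOn (fun p => fnorm (f p) ^ 2) QQ :=
    ((hfncont.pow 2)).continuousOn.integrableOn_compact hcompact
  -- the integral inequality
  have hIeq : (fun p => fnorm (pE e f p) ^ 4) = fun p => gg e f p ^ 2 := by
    funext p
    rw [show (4 : ℕ) = 2 * 2 from rfl, pow_mul, fnorm_sq]
    rfl
  rw [hIeq]
  have step1 : ∫ p in QQ, gg e f p ^ 2
      ≤ ∫ p in QQ, (fderiv ℝ (FF e f) p e + 3 * ε * (fnorm (f p) * gg e f p)) :=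
    setIntegral_mono_on I1 (I2.add (I3.const_mul _)) hmeas fun p _ => hpt p
  have step2 : ∫ p in QQ, (fderiv ℝ (FF e f) p e + 3 * ε * (fnorm (f p) * gg e f p))
      = 3 * ε * ∫ p in QQ, fnorm (f p) * gg e f p := by
    rw [integral_add I2 (I3.const_mul _), hzero (FF e f) hF hFper1 hFper2,
      MeasureTheory.integral_const_mul, zero_add]
  -- Cauchy-Schwarz
  haveI : IsFiniteMeasure (volume.restrict QQ) :=
    ⟨by rw [Measure.restrict_apply_univ]; exact hcompact.measure_lt_top⟩
  have hmem1 : MemLp (fun p => fnorm (f p)) (ENNReal.ofReal 2) (volume.restrict QQ) :=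
    MemLp.of_bound hfncont.aestronglyMeasurable ε (ae_of_all _ fun p => by
      rw [Real.norm_eq_abs, abs_of_nonneg (fnorm_nonneg' _)]; exact h0 p)
  have hgle : ∀ p, gg e f p ≤ ε ^ 2 := by
    intro p
    have hh : fnorm (pE e f p) ^ 2 = gg e f p := fnorm_sq _
    rw [← hh]
    have := h1 p
    nlinarith [fnorm_nonneg' (pE e f p)]
  have hmem2 : MemLp (gg e f) (ENNReal.ofReal 2) (volume.restrict QQ) :=
    MemLp.of_bound hgcont.aestronglyMeasurable (ε ^ 2) (ae_of_all _ fun p => by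
      rw [Real.norm_eq_abs, abs_of_nonneg (hgnn p)]; exact hgle p)
  have hpq : Real.HolderConjugate 2 2 := Real.HolderConjugate.two_two
  have hCS := MeasureTheory.integral_mul_le_Lp_mul_Lq_of_nonneg hpq
    (ae_of_all _ fun p => fnorm_nonneg' (f p)) (ae_of_all _ fun p => hgnn p) hmem1 hmem2
  -- convert rpow to pow
  have hconv : ∀ (h : ℝ × ℝ → ℝ), (∀ p, 0 ≤ h p) →
      ∫ p in QQ, h p ^ (2:ℝ) = ∫ p in QQ, h p ^ 2 := by
    intro h hh
    refine integral_congr_ae (ae_of_all _ fun p => ?_)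
    show h p ^ (2:ℝ) = h p ^ 2
    rw [show ((2:ℝ)) = ((2:ℕ) : ℝ) by norm_num, Real.rpow_natCast]
  rw [hconv _ (fun p => fnorm_nonneg' (f p)), hconv _ hgnn] at hCS
  set I := ∫ p in QQ, gg e f p ^ 2 with hI_def
  set J := ∫ p in QQ, fnorm (f p) ^ 2 with hJ_def
  have hInn : 0 ≤ I := setIntegral_nonneg hmeas fun p _ => sq_nonneg _
  have hJnn : 0 ≤ J := setIntegral_nonneg hmeas fun p _ => sq_nonneg _
  have hCS' : ∫ p in QQ, fnorm (f p) * gg e f p ≤ Real.sqrt J * Real.sqrt I := by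
    calc ∫ p in QQ, fnorm (f p) * gg e f p ≤ J ^ ((1:ℝ)/2) * I ^ ((1:ℝ)/2) := hCS
      _ = Real.sqrt J * Real.sqrt I := by rw [← Real.sqrt_eq_rpow, ← Real.sqrt_eq_rpow]
  have hmain : I ≤ 3 * ε * (Real.sqrt J * Real.sqrt I) := by
    calc I ≤ 3 * ε * ∫ p in QQ, fnorm (f p) * gg e f p := by rw [← step2]; exact step1
      _ ≤ 3 * ε * (Real.sqrt J * Real.sqrt I) := by
          have h3 : (0:ℝ) ≤ 3 * ε := by positivity
          exact mul_le_mul_of_nonneg_left hCS' h3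
  have hsqI : Real.sqrt I ^ 2 = I := Real.sq_sqrt hInn
  have hsqJ : Real.sqrt J ^ 2 = J := Real.sq_sqrt hJnn
  nlinarith [Real.sqrt_nonneg I, Real.sqrt_nonneg J,
    sq_nonneg (Real.sqrt I - 3 * ε * Real.sqrt J)]

lemma cont_fnorm_pE (e : ℝ × ℝ) (f : ℝ × ℝ → Matrix (Fin 2) (Fin 2) ℂ)
    (hsm : ∀ i j, ContDiff ℝ (⊤ : ℕ∞) fun q => f q i j) :
    Continuous fun p => fnorm (pE e f p) := by
  have h : (fun p => fnorm (pE e f p))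
      = fun p => Real.sqrt (∑ z : Fin 2 × Fin 2,
          ‖De e (L617.uu f z) p‖ ^ 2) := by
    funext p
    rw [fnorm_eq_sqrt_sum]
    rfl
  rw [h]
  exact Real.continuous_sqrt.comp (continuous_finset_sum _ fun z _ =>
    (continuous_norm.comp (De_contDiff (hsm z.1 z.2)).continuous).pow 2)


/-- Lemma 6.17: there is a constant `C > 0` such that for every Hermitian matrix valued
doubly periodic function `f` on the torus whose `C²` norm is at most `ε`, the `L⁴` norm of
the gradient of `f` is bounded by `C ε^{1/2}` times the square root of the `L²` norm of `f`. -/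
theorem l4_gradient_bound :
    ∃ C : ℝ, 0 < C ∧
      ∀ (ε : ℝ), 0 < ε →
      ∀ f : ℝ × ℝ → Matrix (Fin 2) (Fin 2) ℂ,
        (∀ i j, ContDiff ℝ (⊤ : ℕ∞) fun q => f q i j) →
        DoublyPeriodic f →
        (∀ p, (f p).IsHermitian) →
        (∀ p, fnorm (f p) ≤ ε) →
        (∀ p, fnorm (pX f p) ≤ ε) →
        (∀ p, fnorm (pY f p) ≤ ε) →
        (∀ p, fnorm (pX (pX f) p) ≤ ε) →
        (∀ p, fnorm (pX (pY f) p) ≤ ε) →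
        (∀ p, fnorm (pY (pX f) p) ≤ ε) →
        (∀ p, fnorm (pY (pY f) p) ≤ ε) →
        (∫ p in Set.Icc (0 : ℝ) 1 ×ˢ Set.Icc (0 : ℝ) 1,
            (fnorm (pX f p) ^ 4 + fnorm (pY f p) ^ 4)) ^ ((1 : ℝ) / 4) ≤
          C * ε ^ ((1 : ℝ) / 2) *
            (∫ p in Set.Icc (0 : ℝ) 1 ×ˢ Set.Icc (0 : ℝ) 1,
              fnorm (f p) ^ 2) ^ ((1 : ℝ) / 4) := by
  refine ⟨3, by norm_num, ?_⟩
  intro ε hε f hsm hper _herm h0 h1x h1y h2xx _h2xy _h2yx h2yy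
  have hcompact : IsCompact QQ := isCompact_Icc.prod isCompact_Icc
  have hmeas : MeasurableSet QQ := measurableSet_Icc.prod measurableSet_Icc
  have HX : ∫ p in QQ, fnorm (pX f p) ^ 4 ≤ 9 * ε ^ 2 * ∫ p in QQ, fnorm (f p) ^ 2 :=
    core (1, 0) (fun F hF hp1 _ => zeroX F hF hp1) ε hε f hsm hper h0 h1x h2xx
  have HY : ∫ p in QQ, fnorm (pY f p) ^ 4 ≤ 9 * ε ^ 2 * ∫ p in QQ, fnorm (f p) ^ 2 :=
    core (0, 1) (fun F hF _ hp2 => zeroY F hF hp2) ε hε f hsm hper h0 h1y h2yy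
  have IX : IntegrableOn (fun p => fnorm (pX f p) ^ 4) QQ :=
    ((cont_fnorm_pE (1, 0) f hsm).pow 4).continuousOn.integrableOn_compact hcompact
  have IY : IntegrableOn (fun p => fnorm (pY f p) ^ 4) QQ :=
    ((cont_fnorm_pE (0, 1) f hsm).pow 4).continuousOn.integrableOn_compact hcompact
  have hsplit : ∫ p in QQ, (fnorm (pX f p) ^ 4 + fnorm (pY f p) ^ 4)
      = (∫ p in QQ, fnorm (pX f p) ^ 4) + ∫ p in QQ, fnorm (pY f p) ^ 4 :=
    integral_add IX IY
  set J := ∫ p in QQ, fnorm (f p) ^ 2 with hJ_def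
  have hJ : 0 ≤ J := setIntegral_nonneg hmeas fun p _ => sq_nonneg _
  have htot : ∫ p in QQ, (fnorm (pX f p) ^ 4 + fnorm (pY f p) ^ 4) ≤ 81 * ε ^ 2 * J := by
    rw [hsplit]
    nlinarith [sq_nonneg ε, mul_nonneg (sq_nonneg ε) hJ]
  have h0le : 0 ≤ ∫ p in QQ, (fnorm (pX f p) ^ 4 + fnorm (pY f p) ^ 4) :=
    setIntegral_nonneg hmeas fun p _ => by positivity
  have hR : 0 ≤ 3 * ε ^ ((1:ℝ)/2) * J ^ ((1:ℝ)/4) :=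
    mul_nonneg (mul_nonneg (by norm_num) (Real.rpow_nonneg hε.le _)) (Real.rpow_nonneg hJ _)
  have h1 : (ε ^ ((1:ℝ)/2)) ^ (4:ℕ) = ε ^ 2 := by
    rw [← Real.rpow_natCast (ε ^ ((1:ℝ)/2)) 4, ← Real.rpow_mul hε.le,
      show ((1:ℝ)/2) * ((4:ℕ):ℝ) = ((2:ℕ):ℝ) by norm_num, Real.rpow_natCast]
  have h2 : (J ^ ((1:ℝ)/4)) ^ (4:ℕ) = J := by
    rw [← Real.rpow_natCast (J ^ ((1:ℝ)/4)) 4, ← Real.rpow_mul hJ,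
      show ((1:ℝ)/4) * ((4:ℕ):ℝ) = 1 by norm_num, Real.rpow_one]
  have hR4 : (3 * ε ^ ((1:ℝ)/2) * J ^ ((1:ℝ)/4)) ^ (4:ℕ) = 81 * ε ^ 2 * J := by
    rw [mul_pow, mul_pow, h1, h2]
    norm_num
  calc (∫ p in QQ, (fnorm (pX f p) ^ 4 + fnorm (pY f p) ^ 4)) ^ ((1:ℝ)/4)
      ≤ ((3 * ε ^ ((1:ℝ)/2) * J ^ ((1:ℝ)/4)) ^ (4:ℕ)) ^ ((1:ℝ)/4) := by
        refine Real.rpow_le_rpow h0le ?_ (by norm_num)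
        rw [hR4]
        exact htot
    _ = 3 * ε ^ ((1:ℝ)/2) * J ^ ((1:ℝ)/4) := by
        rw [← Real.rpow_natCast (3 * ε ^ ((1:ℝ)/2) * J ^ ((1:ℝ)/4)) 4, ← Real.rpow_mul hR,
          show ((4:ℕ):ℝ) * ((1:ℝ)/4) = 1 by norm_num, Real.rpow_one]
end
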